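/- arXiv:0903.5316 — 11 statements merged into one kernel-verified Lean document; each statement's English description precedes it below -/
import Mathlib

section
/- The Thue–Morse sequence is cube-free: there is no nonempty finite word u and position i such that t[i..i+3|u|-1] = uuu. -/
/-- The word `u` occurs in the sequence `x` at position `i`. -/
def occursAt {A : Type*} (x : ℕ → A) (u : List A) (i : ℕ) : Prop :=
  ∀ j : Fin u.length, x (i + (j : ℕ)) = u.get j

open Fin.NatCast

/-- The Thue–Morse sequence: parity of the binary digit sum. -/
def thue (n : ℕ) : Fin 2 := ((Nat.digits 2 n).sum : Fin 2)

/-!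
A cube `uuu` at position `i` makes the Thue–Morse sequence `t` periodic with period `n = |u|` on
the window `[i, i + 3n)`. If `n` is even, `t (2k) = t k` turns this into a period `n / 2` on a
window of length `3n / 2`, so we descend. If `n` is odd, the relation `t (2k) ≠ t (2k + 1)` is
carried by the period to an odd position, where `t (2k + 1) ≠ t (2k + 2)` means `t k = t (k + 1)`;
this produces three equal consecutive letters, impossible since one of two consecutive positions
is even.
-/

def HasPeriodOn {A : Type*} (x : ℕ → A) (p i l : ℕ) : Prop :=
  ∀ j, i ≤ j → j + p < i + l → x j = x (j + p)

lemma List.getElem_append_append_self {A : Type*} (u : List A) (k : ℕ)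
    (hk : k + u.length < (u ++ u ++ u).length) :
    (u ++ u ++ u)[k] = (u ++ u ++ u)[k + u.length] := by
  simp only [List.length_append] at hk
  simp only [List.getElem_append, List.length_append]
  split_ifs <;> first | omega | (congr 1; omega)

lemma occursAt.hasPeriodOn {A : Type*} {x : ℕ → A} {u : List A} {i : ℕ}
    (h : occursAt x (u ++ u ++ u) i) : HasPeriodOn x u.length i (3 * u.length) := by
  intro j hij hj
  obtain ⟨k, rfl⟩ : ∃ k, j = i + k := ⟨j - i, by omega⟩
  have hlen : (u ++ u ++ u).length = 3 * u.length := by simp only [List.length_append]; ring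
  rw [h ⟨k, by omega⟩, add_assoc, h ⟨k + u.length, by omega⟩]
  exact List.getElem_append_append_self u k (by omega)

lemma thue_two_mul (m : ℕ) : thue (2 * m) = thue m := by
  rcases Nat.eq_zero_or_pos m with rfl | hm
  · rfl
  · rw [thue, ← zero_add (2 * m), Nat.digits_add 2 one_lt_two 0 m two_pos (Or.inr hm.ne')]
    simp [thue]

lemma thue_two_mul_add_one (m : ℕ) : thue (2 * m + 1) = thue m + 1 := by
  rw [thue, add_comm, Nat.digits_add 2 one_lt_two 1 m one_lt_two (Or.inl one_ne_zero)]
  simp [thue, add_comm]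

lemma thue_two_mul_ne_succ (k : ℕ) : thue (2 * k) ≠ thue (2 * k + 1) := by
  rw [thue_two_mul, thue_two_mul_add_one]
  generalize thue k = a
  revert a; decide

lemma thue_two_mul_add_one_ne_succ_iff (k : ℕ) :
    thue (2 * k + 1) ≠ thue (2 * k + 2) ↔ thue k = thue (k + 1) := by
  rw [thue_two_mul_add_one, show 2 * k + 2 = 2 * (k + 1) by ring, thue_two_mul]
  generalize thue k = a; generalize thue (k + 1) = b
  revert a b; decide

lemma not_thue_eq_succ_eq_succ (p : ℕ) :
    ¬ (thue p = thue (p + 1) ∧ thue (p + 1) = thue (p + 2)) := by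
  rintro ⟨h₁, h₂⟩
  rcases Nat.even_or_odd' p with ⟨r, rfl | rfl⟩
  · exact thue_two_mul_ne_succ r h₁
  · exact thue_two_mul_ne_succ (r + 1) h₂

lemma HasPeriodOn.thue_half {m i : ℕ} (h : HasPeriodOn thue (2 * m) i (6 * m)) :
    HasPeriodOn thue m ((i + 1) / 2) (3 * m) := by
  intro k hk₁ hk₂
  have := h (2 * k) (by omega) (by omega)
  rwa [← mul_add, thue_two_mul, thue_two_mul] at this

lemma HasPeriodOn.thue_eq_succ {m i l k : ℕ} (h : HasPeriodOn thue (2 * m + 1) i l)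
    (hk₁ : i ≤ 2 * k) (hk₂ : 2 * k + 2 * m + 2 < i + l) : thue (k + m) = thue (k + m + 1) := by
  have hne := thue_two_mul_ne_succ k
  rw [h (2 * k) hk₁ (by omega), h (2 * k + 1) (by omega) (by omega)] at hne
  rw [← thue_two_mul_add_one_ne_succ_iff]
  rwa [show 2 * k + (2 * m + 1) = 2 * (k + m) + 1 by ring,
    show 2 * k + 1 + (2 * m + 1) = 2 * (k + m) + 2 by ring] at hne

lemma thue_not_hasPeriodOn_odd (m i : ℕ) : ¬ HasPeriodOn thue (2 * m + 1) i (6 * m + 3) := by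
  intro h
  rcases Nat.eq_zero_or_pos m with rfl | hm
  · exact not_thue_eq_succ_eq_succ i ⟨h i le_rfl (by omega), h (i + 1) (by omega) (by omega)⟩
  · set k := (i + 1) / 2
    have h₂ : thue (k + 1 + m) = thue (k + 1 + m + 1) := h.thue_eq_succ (by omega) (by omega)
    rw [add_right_comm k 1 m] at h₂
    exact not_thue_eq_succ_eq_succ (k + m) ⟨h.thue_eq_succ (by omega) (by omega), h₂⟩

lemma thue_not_hasPeriodOn {n : ℕ} (hn : 0 < n) (i : ℕ) : ¬ HasPeriodOn thue n i (3 * n) := by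
  induction n using Nat.strong_induction_on generalizing i with
  | _ n ih =>
  intro h
  rcases Nat.even_or_odd' n with ⟨m, rfl | rfl⟩
  · exact ih m (by omega) (by omega) _ (HasPeriodOn.thue_half (by rwa [← mul_assoc] at h))
  · exact thue_not_hasPeriodOn_odd m i (by convert h using 1; ring)

/-- The Thue–Morse sequence is cube-free. -/
theorem thue_cubeFree :
    ¬ ∃ (u : List (Fin 2)) (i : ℕ), u ≠ [] ∧ occursAt thue (u ++ u ++ u) i := by
  rintro ⟨u, i, hu, h⟩
  exact thue_not_hasPeriodOn (List.length_pos_iff.mpr hu) i h.hasPeriodOn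
end

section
/- If for some n the subword complexity of a sequence x over a finite alphabet satisfies p_x(n) ≤ n, then x is eventually periodic. -/
/-- The subword complexity: the number of distinct length-`n` factors of `x`. -/
noncomputable def subwordComplexity {A : Type*} (x : ℕ → A) (n : ℕ) : ℕ :=
  Set.ncard {u : List A | u.length = n ∧ ∃ i, occursAt x u i}

/-- `x` is eventually periodic. -/
def EventuallyPeriodic {A : Type*} (x : ℕ → A) : Prop :=
  ∃ K T : ℕ, 1 ≤ T ∧ ∀ i : ℕ, K ≤ i → x (i + T) = x i

section Factor

variable {A : Type*} (x : ℕ → A)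

def factor (m i : ℕ) : Fin m → A := fun r => x (i + r)

theorem occursAt_iff_eq_ofFn_factor (u : List A) (i : ℕ) :
    occursAt x u i ↔ u = List.ofFn (factor x u.length i) := by
  constructor
  · intro hu
    exact List.ext_get (by simp) fun k hk _ => by simp [factor, hu ⟨k, hk⟩]
  · rintro hu ⟨j, hj⟩
    rw [List.get_eq_getElem, List.getElem_of_eq hu hj, List.getElem_ofFn]
    rfl

theorem subwordComplexity_eq_ncard_range_factor (m : ℕ) :
    subwordComplexity x m = (Set.range (factor x m)).ncard := by
  have hset : {u : List A | u.length = m ∧ ∃ i, occursAt x u i} =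
      List.ofFn '' Set.range (factor x m) := by
    ext u
    simp only [Set.mem_ofPred_eq, Set.mem_image, Set.mem_range, occursAt_iff_eq_ofFn_factor]
    constructor
    · rintro ⟨rfl, i, hu⟩
      exact ⟨_, ⟨i, rfl⟩, hu.symm⟩
    · rintro ⟨_, ⟨i, rfl⟩, rfl⟩
      exact ⟨List.length_ofFn, i, by rw [List.ofFn_inj', List.length_ofFn]⟩
  rw [subwordComplexity, hset, Set.ncard_image_of_injective _ List.ofFn_injective]

theorem subwordComplexity_zero : subwordComplexity x 0 = 1 := by
  rw [subwordComplexity_eq_ncard_range_factor, Set.ncard_eq_one]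
  exact ⟨factor x 0 0,
    Set.eq_singleton_iff_unique_mem.2 ⟨⟨0, rfl⟩, fun _ _ => Subsingleton.elim _ _⟩⟩

theorem factor_succ_init (m i : ℕ) : Fin.init (factor x (m + 1) i) = factor x m i := rfl

theorem factor_succ_last (m i : ℕ) : factor x (m + 1) i (Fin.last m) = x (i + m) := rfl

/-- No factor of length `m` is right special, i.e. has two distinct right extensions. -/
def NoRightSpecial (m : ℕ) : Prop :=
  ∀ i j, factor x m i = factor x m j → x (i + m) = x (j + m)

theorem noRightSpecial_of_subwordComplexity_succ_le [Finite A] {m : ℕ}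
    (hc : subwordComplexity x (m + 1) ≤ subwordComplexity x m) : NoRightSpecial x m := by
  intro i j hij
  rw [subwordComplexity_eq_ncard_range_factor, subwordComplexity_eq_ncard_range_factor] at hc
  have hinit : factor x (m + 1) i = factor x (m + 1) j := by
    refine Set.inj_on_of_surj_on_of_ncard_le (fun u _ => Fin.init u) ?_ ?_ hc
      ⟨i, rfl⟩ ⟨j, rfl⟩ (by simpa only [factor_succ_init] using hij)
    · rintro _ ⟨k, rfl⟩
      exact ⟨k, rfl⟩
    · rintro _ ⟨k, rfl⟩
      exact ⟨_, ⟨k, rfl⟩, rfl⟩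
  simpa only [factor_succ_last] using congrFun hinit (Fin.last m)

namespace NoRightSpecial

variable {x} {m : ℕ} (hx : NoRightSpecial x m)
include hx

theorem factor_succ_eq {i j : ℕ} (hij : factor x m i = factor x m j) :
    factor x m (i + 1) = factor x m (j + 1) := by
  funext ⟨r, hr⟩
  rcases Nat.lt_or_ge (r + 1) m with hr' | hr'
  · simpa [factor, Nat.add_right_comm, Nat.add_assoc] using congrFun hij ⟨r + 1, hr'⟩
  · obtain rfl : r + 1 = m := by omega
    simpa [factor, Nat.add_assoc, Nat.add_comm 1] using hx i j hij

theorem factor_add_eq {i j : ℕ} (hij : factor x m i = factor x m j) (k : ℕ) :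
    factor x m (i + k) = factor x m (j + k) := by
  induction k with
  | zero => exact hij
  | succ k ih => exact hx.factor_succ_eq ih

end NoRightSpecial

end Factor

theorem eventuallyPeriodic_of_shift_eq {A : Type*} {x : ℕ → A} {i j : ℕ} (hij : i < j)
    (h : ∀ k, x (i + k) = x (j + k)) : EventuallyPeriodic x := by
  refine ⟨i, j - i, by omega, fun t ht => ?_⟩
  have := h (t - i)
  rw [show i + (t - i) = t by omega, show j + (t - i) = t + (j - i) by omega] at this
  exact this.symm

theorem Nat.exists_lt_succ_le_of_le_self {f : ℕ → ℕ} (h0 : 0 < f 0) {n : ℕ}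
    (hn : f n ≤ n) :
    ∃ m < n, f (m + 1) ≤ f m := by
  induction n with
  | zero => omega
  | succ n ih =>
    by_cases hle : f (n + 1) ≤ f n
    · exact ⟨n, by omega, hle⟩
    · obtain ⟨m, hm, hfm⟩ := ih (by omega)
      exact ⟨m, by omega, hfm⟩

/-- If `p_x(n) ≤ n` for some `n`, then `x` is eventually periodic. -/
theorem eventuallyPeriodic_of_subwordComplexity_le {A : Type*} [Fintype A]
    (x : ℕ → A) (n : ℕ) (h : subwordComplexity x n ≤ n) :
    EventuallyPeriodic x := by
  obtain ⟨m, -, hc⟩ :=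
    Nat.exists_lt_succ_le_of_le_self (subwordComplexity_zero x ▸ Nat.one_pos) h
  have hx := noRightSpecial_of_subwordComplexity_succ_le x hc
  obtain ⟨i, j, hij, hfac⟩ :=
    Set.finite_univ.exists_lt_map_eq_of_forall_mem (f := factor x m) fun _ => Set.mem_univ _
  refine eventuallyPeriodic_of_shift_eq (i := i + m) (j := j + m) (by omega) fun k => ?_
  simpa only [Nat.add_right_comm _ m k] using
    hx _ _ (hx.factor_add_eq hfac k)
end

section
/- For every sequence y over a finite alphabet there exists an almost periodic sequence x such that every factor of x is a factor of y. -/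
/-- A sequence is almost periodic (uniformly recurrent) if every factor
occurs in every sufficiently long window. -/
def AlmostPeriodic {A : Type*} (x : ℕ → A) : Prop :=
  ∀ u : List A, (∃ i, occursAt x u i) →
    ∃ l : ℕ, ∀ i : ℕ, ∃ j : ℕ, i ≤ j ∧ j + u.length ≤ i + l ∧ occursAt x u j

open Set Function

section MinimalSubsystem

variable {X : Type*} [TopologicalSpace X] {f : X → X}

structure IsSubsystem (f : X → X) (s : Set X) : Prop where
  nonempty : s.Nonempty
  isClosed : IsClosed s
  mapsTo : MapsTo f s s

theorem isSubsystem_closure_range_iterate (hf : Continuous f) (x : X) :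
    IsSubsystem f (closure (range fun n => f^[n] x)) := by
  refine ⟨⟨x, subset_closure ⟨0, rfl⟩⟩, isClosed_closure, MapsTo.closure ?_ hf⟩
  rintro _ ⟨n, rfl⟩
  exact ⟨n + 1, iterate_succ_apply' f n x⟩

theorem IsSubsystem.exists_minimal_subset [CompactSpace X] {s : Set X} (hs : IsSubsystem f s) :
    ∃ M ⊆ s, Minimal (IsSubsystem f) M := by
  refine zorn_superset_nonempty {t | IsSubsystem f t} ?_ s hs
  rintro c hc hchain ⟨t, ht⟩
  have : Nonempty c := ⟨⟨t, ht⟩⟩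
  refine ⟨⋂₀ c, ⟨?_, isClosed_sInter fun t ht => (hc ht).isClosed, ?_⟩,
    fun t ht => sInter_subset_of_mem ht⟩
  · have hdir : DirectedOn (· ⊇ ·) c := fun a ha b hb =>
      (hchain.total ha hb).elim (fun h => ⟨a, ha, subset_rfl, h⟩) (fun h => ⟨b, hb, h, subset_rfl⟩)
    exact IsCompact.nonempty_sInter_of_directed_nonempty_isCompact_isClosed hdir
      (fun t ht => (hc ht).nonempty) (fun t ht => (hc ht).isClosed.isCompact) (fun t ht => (hc ht).isClosed)
  · exact fun z hz => mem_sInter.2 fun t ht => (hc ht).mapsTo (mem_sInter.1 hz t ht)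

variable {M U : Set X} {x : X}

theorem Minimal.exists_iterate_mem (hM : Minimal (IsSubsystem f) M) (hf : Continuous f)
    (hU : IsOpen U) (hxM : x ∈ M) (hxU : x ∈ U) {z : X} (hz : z ∈ M) :
    ∃ n, f^[n] z ∈ U := by
  by_contra! hzU
  set avoiding := M ∩ ⋂ n, (f^[n]) ⁻¹' Uᶜ
  have hsub : IsSubsystem f avoiding := by
    refine ⟨⟨z, hz, mem_iInter.2 hzU⟩,
      hM.prop.isClosed.inter (isClosed_iInter fun n => hU.isClosed_compl.preimage (hf.iterate n)), ?_⟩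
    rintro w ⟨hwM, hwU⟩
    refine ⟨hM.prop.mapsTo hwM, mem_iInter.2 fun n => ?_⟩
    simpa only [mem_preimage, ← iterate_succ_apply] using mem_iInter.1 hwU (n + 1)
  have hMsub : M ⊆ avoiding := hM.le_of_le hsub inter_subset_left
  exact mem_iInter.1 (hMsub hxM).2 0 hxU

theorem Minimal.exists_bound_iterate_mem [CompactSpace X] (hM : Minimal (IsSubsystem f) M)
    (hf : Continuous f) (hU : IsOpen U) (hxM : x ∈ M) (hxU : x ∈ U) :
    ∃ N, ∀ z ∈ M, ∃ n ≤ N, f^[n] z ∈ U := by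
  have hcover : M ⊆ ⋃ N, ⋃ n ≤ N, (f^[n]) ⁻¹' U := fun z hz =>
    let ⟨n, hn⟩ := hM.exists_iterate_mem hf hU hxM hxU hz
    mem_iUnion₂.2 ⟨n, n, mem_iUnion.2 ⟨le_rfl, hn⟩⟩
  obtain ⟨N, hN⟩ := hM.prop.isClosed.isCompact.elim_directed_cover _
    (fun N => isOpen_biUnion fun n _ => hU.preimage (hf.iterate n)) hcover
    (Monotone.directed_le fun _ _ hNN' => biUnion_subset_biUnion_left fun _ hn => le_trans hn hNN')
  refine ⟨N, fun z hz => ?_⟩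
  obtain ⟨n, hnN, hn⟩ := mem_iUnion₂.1 (hN hz)
  exact ⟨n, hnN, hn⟩

end MinimalSubsystem

section Shift

open SymbolicDynamics.FullShift

variable {A : Type*}

theorem shift_one_iterate (n : ℕ) : (shift (A := A) 1)^[n] = shift n := by
  induction n with
  | zero => ext; simp
  | succ n ih => funext z; rw [iterate_succ_apply', ih, ← shift_add]

theorem occursAt_shift {z : ℕ → A} {u : List A} {n i : ℕ} :
    occursAt (shift n z) u i ↔ occursAt z u (n + i) := by
  simp only [occursAt, shift_apply, add_assoc]

theorem isOpen_setOf_occursAt [TopologicalSpace A] [DiscreteTopology A] (u : List A) (i : ℕ) :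
    IsOpen {z : ℕ → A | occursAt z u i} := by
  simp only [occursAt, ofPred_forall]
  exact isOpen_iInter_of_finite fun j =>
    (isOpen_discrete {u.get j}).preimage (continuous_apply (A := fun _ : ℕ => A) (i + (j : ℕ)))

variable [TopologicalSpace A] [DiscreteTopology A]

theorem almostPeriodic_of_mem_minimal [Finite A] {M : Set (ℕ → A)}
    (hM : Minimal (IsSubsystem (shift 1)) M) {x : ℕ → A} (hx : x ∈ M) : AlmostPeriodic x := by
  rintro u ⟨i₀, hi₀⟩
  obtain ⟨N, hN⟩ := hM.exists_bound_iterate_mem (continuous_shift 1) (isOpen_setOf_occursAt u 0)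
    (hM.prop.mapsTo.iterate i₀ hx) (by rwa [mem_ofPred_eq, shift_one_iterate, occursAt_shift, add_zero])
  refine ⟨N + u.length, fun i => ?_⟩
  obtain ⟨n, hnN, hn⟩ := hN _ (hM.prop.mapsTo.iterate i hx)
  rw [mem_ofPred_eq, ← iterate_add_apply, shift_one_iterate, occursAt_shift] at hn
  exact ⟨n + i, by omega, by omega, hn⟩

theorem exists_occursAt_of_mem_closure_orbit {x y : ℕ → A}
    (hx : x ∈ closure (range fun n => (shift 1)^[n] y)) {u : List A} {i : ℕ}
    (hu : occursAt x u i) : ∃ j, occursAt y u j := by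
  obtain ⟨_, hz, n, rfl⟩ := mem_closure_iff.1 hx _ (isOpen_setOf_occursAt u i) hu
  change occursAt ((shift 1)^[n] y) u i at hz
  rw [shift_one_iterate] at hz
  exact ⟨n + i, occursAt_shift.1 hz⟩

end Shift

/-- For every sequence `y` there is an almost periodic sequence `x` all of whose
factors are factors of `y`. -/
theorem exists_almostPeriodic_subFactors {A : Type*} [Fintype A] (y : ℕ → A) :
    ∃ x : ℕ → A, AlmostPeriodic x ∧
      ∀ u : List A, (∃ i, occursAt x u i) → ∃ i, occursAt y u i := by
  let : TopologicalSpace A := ⊥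
  have : DiscreteTopology A := ⟨rfl⟩
  obtain ⟨M, hMy, hM⟩ := (isSubsystem_closure_range_iterate
    (SymbolicDynamics.FullShift.continuous_shift 1) y).exists_minimal_subset
  obtain ⟨x, hx⟩ := hM.prop.nonempty
  exact ⟨x, almostPeriodic_of_mem_minimal hM hx,
    fun u ⟨i, hi⟩ => exists_occursAt_of_mem_closure_orbit (hMy hx) hi⟩
end

section
/- If x and y are sequences over a finite alphabet, x is almost periodic, and every factor of y is a factor of x, then every factor of x is a factor of y (minimality of almost periodic sequences). -/
/-! If `u` occurs in every window of length `l` of the almost periodic `x`, then the prefix of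
length `l` of `y`, being a factor of `x`, is such a window and so contains `u`. -/

theorem occursAt_ofFn {A : Type*} (x : ℕ → A) (l i : ℕ) :
    occursAt x (List.ofFn fun k : Fin l => x (i + k)) i := by
  intro j
  simp

theorem occursAt.of_mem_window {A : Type*} {x y : ℕ → A} {u w : List A} {i j k : ℕ}
    (hu : occursAt x u j) (hwx : occursAt x w i) (hwy : occursAt y w k)
    (hij : i ≤ j) (hju : j + u.length ≤ i + w.length) :
    occursAt y u (k + (j - i)) := by
  intro m
  have hm : j - i + m < w.length := by omega
  calc y (k + (j - i) + m) = w.get ⟨j - i + m, hm⟩ := by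
        rw [← hwy ⟨j - i + m, hm⟩, Nat.add_assoc]
    _ = x (j + m) := by
        rw [← hwx ⟨j - i + m, hm⟩]
        congr 1
        simp only
        omega
    _ = u.get m := hu m

theorem almostPeriodic_minimality_general {A : Type*}
    (x y : ℕ → A) (hx : AlmostPeriodic x)
    (hsub : ∀ u : List A, (∃ i, occursAt y u i) → ∃ i, occursAt x u i) :
    ∀ u : List A, (∃ i, occursAt x u i) → ∃ i, occursAt y u i := by
  intro u hu
  obtain ⟨l, hl⟩ := hx u hu
  have hprefix := occursAt_ofFn y l 0
  obtain ⟨i, hi⟩ := hsub _ ⟨0, hprefix⟩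
  obtain ⟨j, hij, hjl, hj⟩ := hl i
  exact ⟨_, hj.of_mem_window hi hprefix hij (by simpa using hjl)⟩

/-- Minimality of almost periodic sequences: if `x` is almost periodic and
every factor of `y` is a factor of `x`, then every factor of `x` is a factor of `y`. -/
theorem almostPeriodic_minimality {A : Type*} [Fintype A]
    (x y : ℕ → A) (hx : AlmostPeriodic x)
    (hsub : ∀ u : List A, (∃ i, occursAt y u i) → ∃ i, occursAt x u i) :
    ∀ u : List A, (∃ i, occursAt x u i) → ∃ i, occursAt y u i :=
  almostPeriodic_minimality_general x y hx hsub
end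

section
/- If x is a computable almost periodic sequence over a finite alphabet, then the regulator r_x is computable if and only if the set of factors Fac(x) is decidable. -/
/-- The regulator of almost periodicity: `regulator x n` is the least `l` such
that every length-`n` factor of `x` occurs in every length-`l` window of `x`. -/
noncomputable def regulator {A : Type*} (x : ℕ → A) (n : ℕ) : ℕ :=
  sInf {l : ℕ | ∀ u : List A, u.length = n → (∃ i, occursAt x u i) →
    ∀ i : ℕ, ∃ j : ℕ, i ≤ j ∧ j + n ≤ i + l ∧ occursAt x u j}

/-!
If `r_x` is computable, then `u` is a factor of `x` iff it is an infix of the prefix of `x` of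
length `r_x |u|`, which is a finite check on a computable word.

Conversely, `r_x n` is the least `l` such that every factor of length `l` contains every factor
of length `n` as an infix. Over a finite alphabet there are finitely many words of each length,
so a decision procedure for factors decides this property of `(n, l)`, and `r_x n` is found by
unbounded search, which terminates because `x` is almost periodic.
-/

open List

section Lists

variable {α : Type*}

theorem List.isInfix_iff_exists_take_drop {u w : List α} :
    u <:+: w ↔ ∃ k ∈ range (w.length + 1), (w.drop k).take u.length = u := by
  constructor
  · rintro ⟨s, t, rfl⟩
    exact ⟨s.length, by simp, by simp⟩
  · rintro ⟨k, -, hk⟩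
    exact (prefix_iff_eq_take.2 hk.symm).isInfix.trans (drop_suffix k w).isInfix

def List.words (s : List α) : ℕ → List (List α)
  | 0 => [[]]
  | n + 1 => (words s n).flatMap fun w => s.map (· :: w)

theorem List.mem_words {s : List α} {n : ℕ} {w : List α} :
    w ∈ words s n ↔ w.length = n ∧ ∀ a ∈ w, a ∈ s := by
  induction n generalizing w with
  | zero => cases w <;> simp [words]
  | succ n ih =>
    cases w with
    | nil => simp [words]
    | cons a w => simp [words, ih, and_left_comm]

end Lists

section Computability

variable {α β σ : Type*} [Primcodable α] [Primcodable β] [Primcodable σ]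

theorem Computable.list_map {f : α → List β} {g : α → β → σ} (hf : Computable f)
    (hg : Computable₂ g) : Computable fun a => (f a).map (g a) := by
  have hstep : Computable₂ fun a (p : ℕ × List σ) => p.2 ++ ((f a)[p.1]?.map (g a)).toList :=
    (Computable.list_append.comp (Computable.snd.comp Computable.snd)
      (Primrec.optionToList.to_comp.comp (Computable.option_map
        (Computable.list_getElem?.comp (hf.comp Computable.fst)
          (Computable.fst.comp Computable.snd))
        (hg.comp (Computable.fst.comp Computable.fst) Computable.snd).to₂))).to₂
  refine (Computable.nat_rec (Computable.list_length.comp hf) (Computable.const []) hstep).of_eq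
    fun a => ?_
  suffices ∀ k, (Nat.rec [] (fun k l => l ++ ((f a)[k]?.map (g a)).toList) k : List σ) =
      ((f a).take k).map (g a) by
    rw [this, take_length]
  intro k
  induction k with
  | zero => rfl
  | succ k ih => rw [take_add_one, map_append, ← Option.toList_map, ← ih]

theorem ComputablePred.comp {p : β → Prop} {f : α → β} (hp : ComputablePred p)
    (hf : Computable f) : ComputablePred fun a => p (f a) := by
  obtain ⟨_, hp⟩ := hp
  exact (hp.comp hf).computablePred

theorem ComputablePred.imp {p q : α → Prop} (hp : ComputablePred p) (hq : ComputablePred q) :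
    ComputablePred fun a => p a → q a := by
  obtain ⟨_, hp⟩ := hp
  obtain ⟨_, hq⟩ := hq
  have : Computable fun a => decide (¬p a ∨ q a) := by
    simpa only [Bool.decide_or, decide_not] using
      Primrec.or.to_comp.comp (Primrec.not.to_comp.comp hp) hq
  exact this.computablePred.of_eq fun _ => imp_iff_not_or.symm

theorem ComputablePred.forall_mem_list {f : α → List β} {p : β → Prop} (hf : Computable f)
    (hp : ComputablePred p) : ComputablePred fun a => ∀ b ∈ f a, p b := by
  obtain ⟨_, hp⟩ := hp
  have hall : PrimrecPred fun l : List Bool => ∀ c ∈ l, c = true :=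
    PrimrecPred.forall_mem_list (Primrec.eq.comp Primrec.id (Primrec.const true))
  exact (hall.computablePred.comp (Computable.list_map hf (hp.comp Computable.snd).to₂)).of_eq
    (by simp)

theorem computablePred_iff_exists_computable_bool {p : α → Prop} :
    ComputablePred p ↔ ∃ f : α → Bool, Computable f ∧ ∀ a, f a = true ↔ p a := by
  simp only [ComputablePred.computable_iff, funext_iff, eq_iff_iff, Iff.comm]

theorem Primrec.list_isInfix [DecidableEq α] : PrimrecRel fun u w : List α => u <:+: w := by
  have htake : PrimrecRel fun (k : ℕ) (p : List α × List α) => (p.2.drop k).take p.1.length = p.1 :=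
    Primrec.eq.comp
      (list_take.comp (list_length.comp (fst.comp snd)) (list_drop.comp fst (snd.comp snd)))
      (fst.comp snd)
  exact (htake.exists_mem_list.comp (list_range.comp (succ.comp (list_length.comp snd)))
    Primrec.id).of_eq fun _ => isInfix_iff_exists_take_drop.symm

theorem Primrec.list_product : Primrec₂ fun (l₁ : List α) (l₂ : List β) => l₁ ×ˢ l₂ :=
  list_flatMap fst (list_map (snd.comp fst) (pair (snd.comp fst) snd).to₂).to₂

theorem Primrec.list_words (s : List α) : Primrec (words s) := by
  refine (Primrec.nat_rec₁ [[]] (list_flatMap snd (list_map (const s)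
    (list_cons.comp snd (snd.comp fst)).to₂).to₂).to₂).of_eq fun n => ?_
  induction n with
  | zero => rfl
  | succ n ih => simp [words, ← ih]

end Computability

section Sequence

variable {A : Type*} (x : ℕ → A)

def IsFactor (u : List A) : Prop := ∃ i, occursAt x u i

def window (i n : ℕ) : List A := (range n).map fun k => x (i + k)

-- `regulator x n` is by definition the least `l` with `WindowsContainFactors x n l`.
def WindowsContainFactors (n l : ℕ) : Prop :=
  ∀ u : List A, u.length = n → IsFactor x u →
    ∀ i : ℕ, ∃ j : ℕ, i ≤ j ∧ j + n ≤ i + l ∧ occursAt x u j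

variable {x}

@[simp] theorem length_window (i n : ℕ) : (window x i n).length = n := by simp [window]

theorem getElem?_window {i n k : ℕ} (hk : k < n) : (window x i n)[k]? = some (x (i + k)) := by
  simp [window, hk]

theorem occursAt_iff_window_eq {u : List A} {i : ℕ} :
    occursAt x u i ↔ window x i u.length = u := by
  simp [occursAt, ext_getElem_iff, window, Fin.forall_iff, eq_comm]

theorem isFactor_window (i n : ℕ) : IsFactor x (window x i n) :=
  ⟨i, occursAt_iff_window_eq.2 (by rw [length_window])⟩

theorem isInfix_window_iff {u : List A} {i l : ℕ} :
    u <:+: window x i l ↔ ∃ j, i ≤ j ∧ j + u.length ≤ i + l ∧ occursAt x u j := by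
  rw [infix_iff_getElem?]
  simp only [length_window]
  constructor
  · rintro ⟨k, hk, hu⟩
    refine ⟨i + k, by omega, by omega, fun m => ?_⟩
    have := hu m m.2
    rw [getElem?_window (by omega), Option.some_inj] at this
    simpa [Nat.add_assoc, Nat.add_comm k] using this
  · rintro ⟨j, hij, hjl, hu⟩
    refine ⟨j - i, by omega, fun m hm => ?_⟩
    rw [getElem?_window (by omega), Option.some_inj]
    simpa [show i + (m + (j - i)) = j + m by omega] using hu ⟨m, hm⟩

theorem windowsContainFactors_iff {n l : ℕ} :
    WindowsContainFactors x n l ↔ ∀ w u : List A, w.length = l → u.length = n →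
      IsFactor x w → IsFactor x u → u <:+: w := by
  constructor
  · rintro h w u rfl hn ⟨i, hw⟩ hu
    rw [occursAt_iff_window_eq] at hw
    rw [← hw, isInfix_window_iff, hn]
    exact h u hn hu i
  · intro h u rfl hu i
    exact isInfix_window_iff.1 (h _ u (length_window i l) rfl (isFactor_window i l) hu)

theorem AlmostPeriodic.exists_windowsContainFactors [Finite A] (hap : AlmostPeriodic x)
    (n : ℕ) : ∃ l, WindowsContainFactors x n l := by
  have hfin : {u : List A | u.length = n ∧ IsFactor x u}.Finite :=
    (finite_length_eq A n).subset fun u hu => hu.1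
  have : ∀ᶠ l in Filter.atTop, ∀ u ∈ {u : List A | u.length = n ∧ IsFactor x u},
      ∀ i, ∃ j, i ≤ j ∧ j + n ≤ i + l ∧ occursAt x u j := by
    refine (Filter.eventually_all_finite hfin).2 fun u ⟨hn, hu⟩ => ?_
    obtain ⟨l₀, hl₀⟩ := hap u hu
    refine Filter.eventually_atTop.2 ⟨l₀, fun l hl i => ?_⟩
    obtain ⟨j, hij, hjl, hj⟩ := hl₀ i
    exact ⟨j, hij, by omega, hj⟩
  obtain ⟨l, hl⟩ := this.exists
  exact ⟨l, fun u hn hu => hl u ⟨hn, hu⟩⟩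

theorem AlmostPeriodic.windowsContainFactors_regulator [Finite A] (hap : AlmostPeriodic x)
    (n : ℕ) : WindowsContainFactors x n (regulator x n) :=
  Nat.sInf_mem (hap.exists_windowsContainFactors n)

theorem AlmostPeriodic.isFactor_iff_isInfix_window [Finite A] (hap : AlmostPeriodic x)
    {u : List A} : IsFactor x u ↔ u <:+: window x 0 (regulator x u.length) := by
  refine ⟨fun hu => ?_, fun hu => ?_⟩
  · obtain ⟨j, -, hj, hocc⟩ := hap.windowsContainFactors_regulator u.length u rfl hu 0
    exact isInfix_window_iff.2 ⟨j, Nat.zero_le j, hj, hocc⟩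
  · obtain ⟨j, -, -, hocc⟩ := isInfix_window_iff.1 hu
    exact ⟨j, hocc⟩

end Sequence

section Decidability

variable {A : Type*} [Primcodable A] {x : ℕ → A}

theorem Computable.window (hx : Computable x) : Computable₂ (window x) :=
  Computable.list_map (Primrec.list_range.to_comp.comp Computable.snd)
    (hx.comp (Primrec.nat_add.to_comp.comp (Computable.fst.comp Computable.fst)
      Computable.snd)).to₂

theorem AlmostPeriodic.computablePred_isFactor [Finite A] (hap : AlmostPeriodic x)
    (hx : Computable x) (hr : Computable (regulator x)) : ComputablePred (IsFactor x) := by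
  classical
  refine (Computable.computablePred ?_).of_eq fun u => hap.isFactor_iff_isInfix_window.symm
  exact Primrec.list_isInfix.decide.to_comp.comp Computable.id
    (hx.window.comp (Computable.const 0) (hr.comp Computable.list_length))

theorem computablePred_windowsContainFactors [Fintype A] (hfac : ComputablePred (IsFactor x)) :
    ComputablePred fun p : ℕ × ℕ => WindowsContainFactors x p.1 p.2 := by
  classical
  let pairs : ℕ × ℕ → List (List A × List A) := fun p =>
    words Finset.univ.toList p.2 ×ˢ words Finset.univ.toList p.1
  have hpairs : Primrec pairs := Primrec.list_product.comp
    ((Primrec.list_words _).comp Primrec.snd) ((Primrec.list_words _).comp Primrec.fst)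
  refine (ComputablePred.forall_mem_list hpairs.to_comp ((hfac.comp Computable.fst).imp
      ((hfac.comp Computable.snd).imp
        (Primrec.list_isInfix.comp Primrec.snd Primrec.fst).computablePred))).of_eq
    fun p => ?_
  simp only [pairs, windowsContainFactors_iff, mem_product, mem_words, Finset.mem_toList,
    Finset.mem_univ, implies_true, and_true, and_imp, Prod.forall]

theorem AlmostPeriodic.computable_regulator [Fintype A] (hap : AlmostPeriodic x)
    (hfac : ComputablePred (IsFactor x)) : Computable (regulator x) := by
  classical
  exact (Computable.find (computablePred_windowsContainFactors hfac)
    hap.exists_windowsContainFactors).of_eq fun _ => (Nat.sInf_def _).symm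

end Decidability

/-- For a computable almost periodic sequence over a finite alphabet, the
regulator is computable iff the set of factors is (computably) decidable. -/
theorem regulator_computable_iff_factors_decidable {A : Type} [Primcodable A] [Fintype A]
    (x : ℕ → A) (hx : Computable x) (hap : AlmostPeriodic x) :
    Computable (regulator x) ↔
      ∃ f : List A → Bool, Computable f ∧
        ∀ u : List A, f u = true ↔ ∃ i, occursAt x u i :=
  calc Computable (regulator x) ↔ ComputablePred (IsFactor x) :=
        ⟨hap.computablePred_isFactor hx, hap.computable_regulator⟩
    _ ↔ _ := computablePred_iff_exists_computable_bool
end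

section
/- The image of an almost periodic sequence under a reversible uniform finite-state transducer with m states is almost periodic; moreover, every length-n factor of M(x) that occurs infinitely often occurs in every window of length g^m(n) - 1, where g(n) = r_x(n) + 1. -/
/-!
Fix a factor `w = x[j', j' + n)` and the state `q = p j'` in which it is read; an occurrence of
the pair `(w, q)` at `j` produces the same output factor at `j` as at `j'`. Call a state *good*
for a factor `v` of `x` if, entering `v` in that state, the transducer meets `(w, q)` inside `v`.
Put `L₀ = n` and `L_{k+1} = r_x(L_k) + 1`. If some window of length `r_x(L_k)` misses `(w, q)`,
then, since the window at `j'` meets it, there are two such windows shifted by one, one missing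
and one meeting `(w, q)`. The factor of length `L_{k+1}` covering both has more good states than
any factor `v` of length `L_k`: `v` occurs inside the missing window, reading up to that
occurrence is a bijection of states (reversibility) pulling the good states of `v` back to good
states of the long factor, and the actual state at the start of the long factor is good but is
mapped to a state that is not good for `v`. So either `(w, q)` occurs in every window of length
`r_x(L_k)` for some `k < m`, or some factor of length `L_{m-1}` has all states good; that factor
occurs in every window of length `r_x(L_{m-1}) = g^m(n) - 1`, and so does `(w, q)`.
-/

namespace Transducer

variable {A B Q : Type*}

def FactorEq (x : ℕ → A) (L t a : ℕ) : Prop :=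
  ∀ τ < L, x (t + τ) = x (a + τ)

namespace FactorEq

variable {x : ℕ → A} {L t a : ℕ}

theorem symm (h : FactorEq x L t a) : FactorEq x L a t :=
  fun τ hτ => (h τ hτ).symm

theorem shift (h : FactorEq x L t a) {σ L' : ℕ} (hσ : σ + L' ≤ L) :
    FactorEq x L' (t + σ) (a + σ) := fun τ hτ => by
  simpa only [Nat.add_assoc] using h (σ + τ) (by omega)

theorem mono (h : FactorEq x L t a) {L' : ℕ} (hL : L' ≤ L) : FactorEq x L' t a :=
  fun τ hτ => h τ (by omega)

end FactorEq

theorem occursAt_ofFn (x : ℕ → A) (L a : ℕ) :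
    occursAt x (List.ofFn fun τ : Fin L => x (a + τ)) a := fun j => by
  simp

theorem occursAt.of_factorEq {x : ℕ → A} {u : List A} {i j : ℕ} (hu : occursAt x u i)
    (h : FactorEq x u.length j i) : occursAt x u j := fun τ =>
  (h τ τ.2).trans (hu τ)

theorem factorEq_of_occursAt_ofFn {x : ℕ → A} {L a j : ℕ}
    (h : occursAt x (List.ofFn fun τ : Fin L => x (a + τ)) j) : FactorEq x L j a :=
  fun τ hτ => by simpa using h ⟨τ, by simpa using hτ⟩

/-- `r_x L` is the least `l` such that `WindowBound x L l`. -/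
def WindowBound (x : ℕ → A) (L l : ℕ) : Prop :=
  ∀ u : List A, u.length = L → (∃ i, occursAt x u i) →
    ∀ i : ℕ, ∃ j : ℕ, i ≤ j ∧ j + L ≤ i + l ∧ occursAt x u j

namespace WindowBound

variable {x : ℕ → A} {L l : ℕ}

theorem exists_factorEq (h : WindowBound x L l) (a i : ℕ) :
    ∃ j, i ≤ j ∧ j + L ≤ i + l ∧ FactorEq x L j a := by
  obtain ⟨j, hij, hjl, hocc⟩ := h _ (List.length_ofFn) ⟨a, occursAt_ofFn x L a⟩ i
  exact ⟨j, hij, hjl, factorEq_of_occursAt_ofFn hocc⟩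

theorem length_le (h : WindowBound x L l) : L ≤ l := by
  obtain ⟨j, -, hjl, -⟩ := h.exists_factorEq 0 0
  omega

theorem of_le_length (h : WindowBound x L l) {L' : ℕ} (hL : L' ≤ L) : WindowBound x L' l := by
  rintro u rfl ⟨a, hu⟩ i
  obtain ⟨j, hij, hjl, hfac⟩ := h.exists_factorEq a i
  exact ⟨j, hij, by omega, occursAt.of_factorEq hu (hfac.mono hL)⟩

end WindowBound

theorem monotone_of_isLeast_windowBound {x : ℕ → A} {r : ℕ → ℕ}
    (hr : ∀ L, IsLeast {l | WindowBound x L l} (r L)) : Monotone r :=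
  fun _ _ hL => (hr _).2 ((hr _).1.of_le_length hL)

def run (x : ℕ → A) (mu : Q → A → Q) (t : ℕ) : ℕ → Q → Q
  | 0 => id
  | s + 1 => fun q => mu (run x mu t s q) (x (t + s))

section Run

variable {x : ℕ → A} {mu : Q → A → Q}

theorem run_bijective (hrev : ∀ a, Function.Bijective fun q => mu q a) (t : ℕ) :
    ∀ s, Function.Bijective (run x mu t s)
  | 0 => Function.bijective_id
  | s + 1 => (hrev (x (t + s))).comp (run_bijective hrev t s)

theorem run_add (t s : ℕ) :
    ∀ s' q, run x mu t (s + s') q = run x mu (t + s) s' (run x mu t s q)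
  | 0, _ => rfl
  | s' + 1, q => by
    show mu (run x mu t (s + s') q) (x (t + (s + s'))) =
      mu (run x mu (t + s) s' (run x mu t s q)) (x (t + s + s'))
    rw [run_add t s s' q, Nat.add_assoc]

theorem run_congr {t t' : ℕ} : ∀ {s}, FactorEq x s t t' → run x mu t s = run x mu t' s
  | 0, _ => rfl
  | s + 1, h => by
    funext q
    simp only [run, run_congr (h.mono s.le_succ), h s s.lt_succ_self]

theorem apply_add_eq_run {p : ℕ → Q} (hp : ∀ t, p (t + 1) = mu (p t) (x t)) (t : ℕ) :
    ∀ s, p (t + s) = run x mu t s (p t)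
  | 0 => rfl
  | s + 1 => by rw [← Nat.add_assoc, hp, apply_add_eq_run hp t s]; rfl

end Run

section Occurrences

variable {x : ℕ → A} {mu : Q → A → Q} {p : ℕ → Q}

def OccursIn (x : ℕ → A) (p : ℕ → Q) (n j' i l : ℕ) : Prop :=
  ∃ j, i ≤ j ∧ j + n ≤ i + l ∧ FactorEq x n j j' ∧ p j = p j'

theorem OccursIn.mono {n j' i l : ℕ} (h : OccursIn x p n j' i l) {i' l' : ℕ} (hi : i' ≤ i)
    (hl : i + l ≤ i' + l') : OccursIn x p n j' i' l' := by
  obtain ⟨j, hij, hjl, hfac, hpj⟩ := h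
  exact ⟨j, by omega, by omega, hfac, hpj⟩

theorem occursIn_self {n j' l : ℕ} (hn : n ≤ l) : OccursIn x p n j' j' l :=
  ⟨j', le_rfl, by omega, fun _ _ => rfl, rfl⟩

/-- The good states of the factor `x[a, a + L)`. -/
def entryStates (x : ℕ → A) (mu : Q → A → Q) (p : ℕ → Q) (n j' a L : ℕ) : Set Q :=
  {q | ∃ σ, σ + n ≤ L ∧ FactorEq x n (a + σ) j' ∧ run x mu a σ q = p j'}

variable {n j' : ℕ}

theorem mem_entryStates_self_iff (hp : ∀ t, p (t + 1) = mu (p t) (x t)) {t L : ℕ} :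
    p t ∈ entryStates x mu p n j' t L ↔ OccursIn x p n j' t L := by
  simp only [entryStates, OccursIn, Set.mem_ofPred_eq, ← apply_add_eq_run hp]
  constructor
  · rintro ⟨σ, hσ, hfac, hpσ⟩
    exact ⟨t + σ, by omega, by omega, hfac, hpσ⟩
  · rintro ⟨j, htj, hjL, hfac, hpj⟩
    obtain ⟨σ, rfl⟩ := Nat.exists_eq_add_of_le htj
    exact ⟨σ, by omega, hfac, hpj⟩

theorem entryStates_subset_of_factorEq {t a L : ℕ} (h : FactorEq x L t a) :
    entryStates x mu p n j' t L ⊆ entryStates x mu p n j' a L := by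
  rintro q ⟨σ, hσ, hfac, hrun⟩
  refine ⟨σ, hσ, fun τ hτ => ?_, ?_⟩
  · rw [← (h.shift hσ) τ hτ, hfac τ hτ]
  · rwa [← run_congr (h.mono (by omega))]

theorem entryStates_congr {t a L : ℕ} (h : FactorEq x L t a) :
    entryStates x mu p n j' t L = entryStates x mu p n j' a L :=
  (entryStates_subset_of_factorEq h).antisymm (entryStates_subset_of_factorEq h.symm)

theorem preimage_run_entryStates_subset {t τ L L' : ℕ} (hL : τ + L ≤ L') :
    run x mu t τ ⁻¹' entryStates x mu p n j' (t + τ) L ⊆ entryStates x mu p n j' t L' := by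
  rintro q ⟨σ, hσ, hfac, hrun⟩
  exact ⟨τ + σ, by omega, by rwa [← Nat.add_assoc], by rwa [run_add]⟩

end Occurrences

theorem ncard_lt_of_preimage_subset {α : Type*} [Finite α] {π : α → α}
    (hπ : Function.Bijective π) {S T : Set α} {q : α} (hST : π ⁻¹' S ⊆ T) (hqT : q ∈ T)
    (hqS : π q ∉ S) : S.ncard < T.ncard := by
  rw [← Set.ncard_preimage_of_injective_subset_range hπ.1 (by simp [hπ.2.range_eq])]
  exact Set.ncard_lt_ncard ((Set.ssubset_iff_of_subset hST).2 ⟨q, hqT, hqS⟩)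

theorem exists_not_iff_succ {G : ℕ → Prop} {a b : ℕ} (ha : G a) (hb : ¬ G b) :
    ∃ t, ¬ (G t ↔ G (t + 1)) := by
  by_contra! h
  have hconst : ∀ t, G t ↔ G 0 := fun t => by
    induction t with
    | zero => rfl
    | succ t ih => exact (h t).symm.trans ih
  exact hb ((hconst b).2 ((hconst a).1 ha))

section Growth

variable [Finite Q] {x : ℕ → A} {mu : Q → A → Q} {p : ℕ → Q} {n j' : ℕ} {r : ℕ → ℕ}

theorem ncard_entryStates_lt (hp : ∀ t, p (t + 1) = mu (p t) (x t))
    (hrev : ∀ a, Function.Bijective fun q => mu q a) {L l s w L' : ℕ} (hwin : WindowBound x L l)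
    (hw : ¬ OccursIn x p n j' w l) (hs : OccursIn x p n j' s L') (hsw : s ≤ w)
    (hwl : w + l ≤ s + L') (a : ℕ) :
    (entryStates x mu p n j' a L).ncard < (entryStates x mu p n j' s L').ncard := by
  obtain ⟨j, hwj, hjl, hfac⟩ := hwin.exists_factorEq a w
  obtain ⟨τ, rfl⟩ := Nat.exists_eq_add_of_le (hsw.trans hwj)
  rw [← entryStates_congr hfac]
  refine ncard_lt_of_preimage_subset (run_bijective hrev s τ)
    (preimage_run_entryStates_subset (by omega)) ((mem_entryStates_self_iff hp).2 hs) ?_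
  rw [← apply_add_eq_run hp, mem_entryStates_self_iff hp]
  exact fun h => hw (h.mono hwj (by omega))

theorem exists_ncard_entryStates_lt (hp : ∀ t, p (t + 1) = mu (p t) (x t))
    (hrev : ∀ a, Function.Bijective fun q => mu q a) {L l : ℕ} (hwin : WindowBound x L l)
    (hn : n ≤ l) (hmiss : ∃ i, ¬ OccursIn x p n j' i l) (a : ℕ) :
    ∃ s, (entryStates x mu p n j' a L).ncard < (entryStates x mu p n j' s (l + 1)).ncard := by
  obtain ⟨i, hi⟩ := hmiss
  obtain ⟨t, ht⟩ :=
    exists_not_iff_succ (G := fun t => OccursIn x p n j' t l) (occursIn_self hn) hi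
  obtain ⟨w, htw, hwt, hw, hs⟩ : ∃ w, t ≤ w ∧ w ≤ t + 1 ∧
      ¬ OccursIn x p n j' w l ∧ OccursIn x p n j' t (l + 1) := by
    by_cases h : OccursIn x p n j' t l
    · exact ⟨t + 1, by omega, le_rfl, fun h' => ht (iff_of_true h h'), h.mono le_rfl (by omega)⟩
    · exact ⟨t, le_rfl, by omega, h, ((not_iff.1 ht).1 h).mono (by omega) (by omega)⟩
  exact ⟨t, ncard_entryStates_lt hp hrev hwin hw hs htw (by omega) a⟩

theorem occursIn_of_le_ncard_entryStates {a L l : ℕ} (hwin : WindowBound x L l)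
    (hp : ∀ t, p (t + 1) = mu (p t) (x t))
    (hall : Nat.card Q ≤ (entryStates x mu p n j' a L).ncard) (i : ℕ) :
    OccursIn x p n j' i l := by
  have huniv : entryStates x mu p n j' a L = Set.univ :=
    Set.eq_of_subset_of_ncard_le (Set.subset_univ _) (by rwa [Set.ncard_univ])
  obtain ⟨j, hij, hjl, hfac⟩ := hwin.exists_factorEq a i
  have hj : p j ∈ entryStates x mu p n j' j L := by
    rw [entryStates_congr hfac, huniv]
    trivial
  exact ((mem_entryStates_self_iff hp).1 hj).mono hij hjl

theorem occursIn_or_le_ncard_entryStates (hp : ∀ t, p (t + 1) = mu (p t) (x t))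
    (hrev : ∀ a, Function.Bijective fun q => mu q a) (hwin : ∀ L, WindowBound x L (r L))
    (hr : Monotone r) :
    ∀ k, (∀ i, OccursIn x p n j' i (r ((fun t => r t + 1)^[k] n))) ∨
      ∃ a, k + 1 ≤ (entryStates x mu p n j' a ((fun t => r t + 1)^[k] n)).ncard
  | 0 =>
    Or.inr ⟨j', (Set.ncard_pos).2
      ⟨p j', (mem_entryStates_self_iff hp).2 (occursIn_self le_rfl)⟩⟩
  | k + 1 => by
    have ih := occursIn_or_le_ncard_entryStates hp hrev hwin hr k
    rw [Function.iterate_succ_apply']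
    set L := (fun t => r t + 1)^[k] n
    have hLl : L ≤ r L := (hwin L).length_le
    by_cases hall : ∀ i, OccursIn x p n j' i (r L)
    · refine Or.inl fun i => (hall i).mono le_rfl ?_
      have := hr (show L ≤ r L + 1 by omega)
      omega
    obtain ⟨a, ha⟩ := ih.resolve_left hall
    have hn : n ≤ L :=
      Function.id_le_iterate_of_id_le (fun t => (hwin t).length_le.trans (Nat.le_succ _)) k n
    obtain ⟨s, hs⟩ := exists_ncard_entryStates_lt hp hrev (hwin L) (hn.trans hLl)
      (by simpa only [not_forall] using hall) a
    exact Or.inr ⟨s, by omega⟩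

theorem occursIn_iterate_card (hp : ∀ t, p (t + 1) = mu (p t) (x t))
    (hrev : ∀ a, Function.Bijective fun q => mu q a) (hwin : ∀ L, WindowBound x L (r L))
    (hr : Monotone r) (i : ℕ) :
    OccursIn x p n j' i ((fun t => r t + 1)^[Nat.card Q] n - 1) := by
  have : Nonempty Q := ⟨p 0⟩
  obtain ⟨k, hk⟩ := Nat.exists_eq_add_of_lt (Nat.card_pos (α := Q))
  rw [hk, Nat.zero_add, Function.iterate_succ_apply', Nat.add_sub_cancel]
  rcases occursIn_or_le_ncard_entryStates hp hrev hwin hr k with hall | ⟨a, ha⟩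
  · exact hall i
  · exact occursIn_of_le_ncard_entryStates (a := a) (hwin _) hp (by omega) i

end Growth

theorem occursAt_output {x : ℕ → A} {mu : Q → A → Q} {p : ℕ → Q} {lam : Q → A → B}
    {y : ℕ → B} (hp : ∀ t, p (t + 1) = mu (p t) (x t)) (hy : ∀ t, y t = lam (p t) (x t))
    {u : List B} {i j : ℕ} (hu : occursAt y u i) (hfac : FactorEq x u.length j i)
    (hpj : p j = p i) : occursAt y u j := by
  refine occursAt.of_factorEq hu fun τ hτ => ?_
  rw [hy, hy, hfac τ hτ, apply_add_eq_run hp, apply_add_eq_run hp, hpj,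
    run_congr (hfac.mono hτ.le)]

end Transducer

open Transducer in
theorem reversible_transducer_almostPeriodic_general {A B Q : Type*} [Fintype Q]
    (m : ℕ) (hm : Fintype.card Q = m)
    (lam : Q → A → B) (mu : Q → A → Q)
    (hrev : ∀ a : A, Function.Bijective (fun q => mu q a))
    (x : ℕ → A)
    (r : ℕ → ℕ)
    (hr : ∀ n : ℕ, IsLeast {l : ℕ | ∀ u : List A, u.length = n →
      (∃ i, occursAt x u i) →
      ∀ i : ℕ, ∃ j : ℕ, i ≤ j ∧ j + n ≤ i + l ∧ occursAt x u j} (r n))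
    (p : ℕ → Q) (hp : ∀ n, p (n + 1) = mu (p n) (x n))
    (y : ℕ → B) (hy : ∀ n, y n = lam (p n) (x n)) :
    AlmostPeriodic y ∧
      ∀ (n : ℕ) (u : List B), u.length = n →
        (∀ N : ℕ, ∃ j : ℕ, N ≤ j ∧ occursAt y u j) →
        ∀ i : ℕ, ∃ j : ℕ, i ≤ j ∧
          j + n ≤ i + ((fun t => r t + 1)^[m] n - 1) ∧ occursAt y u j := by
  have hwin : ∀ L, WindowBound x L (r L) := fun L => (hr L).1
  have hocc : ∀ u : List B, (∃ i, occursAt y u i) → ∀ i, ∃ j, i ≤ j ∧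
      j + u.length ≤ i + ((fun t => r t + 1)^[m] u.length - 1) ∧ occursAt y u j := by
    rintro u ⟨j', hu⟩ i
    obtain ⟨j, hij, hjl, hfac, hpj⟩ := occursIn_iterate_card (j' := j') hp hrev hwin
      (monotone_of_isLeast_windowBound hr) i
    rw [Nat.card_eq_fintype_card, hm] at hjl
    exact ⟨j, hij, hjl, occursAt_output hp hy hu hfac hpj⟩
  refine ⟨fun u hu => ⟨_, hocc u hu⟩, ?_⟩
  rintro n u rfl hinf
  exact hocc u ((hinf 0).imp fun _ h => h.2)

/-- The image of an almost periodic sequence under a reversible uniform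
finite-state transducer with `m` states is almost periodic; moreover every
length-`n` factor of the image occurring infinitely often occurs in every
window of length `g^[m] n - 1`, where `g n = r_x n + 1`. -/
theorem reversible_transducer_almostPeriodic {A B Q : Type*} [Fintype Q]
    (m : ℕ) (hm : Fintype.card Q = m)
    (lam : Q → A → B) (mu : Q → A → Q) (q0 : Q)
    (hrev : ∀ a : A, Function.Bijective (fun q => mu q a))
    (x : ℕ → A) (hx : AlmostPeriodic x)
    (r : ℕ → ℕ)
    (hr : ∀ n : ℕ, IsLeast {l : ℕ | ∀ u : List A, u.length = n →
      (∃ i, occursAt x u i) →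
      ∀ i : ℕ, ∃ j : ℕ, i ≤ j ∧ j + n ≤ i + l ∧ occursAt x u j} (r n))
    (p : ℕ → Q) (hp0 : p 0 = q0) (hp : ∀ n, p (n + 1) = mu (p n) (x n))
    (y : ℕ → B) (hy : ∀ n, y n = lam (p n) (x n)) :
    AlmostPeriodic y ∧
      ∀ (n : ℕ) (u : List B), u.length = n →
        (∀ N : ℕ, ∃ j : ℕ, N ≤ j ∧ occursAt y u j) →
        ∀ i : ℕ, ∃ j : ℕ, i ≤ j ∧
          j + n ≤ i + ((fun t => r t + 1)^[m] n - 1) ∧ occursAt y u j :=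
  reversible_transducer_almostPeriodic_general m hm lam mu hrev x r hr p hp y hy
end

section
/- The product of a precisely almost periodic sequence with a periodic sequence is precisely almost periodic. -/
/-- A sequence is precisely almost periodic if every word occurring in it
occurs along some arithmetic progression. -/
def PreciselyAlmostPeriodic {A : Type*} (x : ℕ → A) : Prop :=
  ∀ u : List A, (∃ i, occursAt x u i) →
    ∃ a d : ℕ, 1 ≤ d ∧ ∀ i : ℕ, occursAt x u (a + i * d)

/-!
It suffices to find, for every prefix of `x`, an arithmetic progression of occurrences all of
whose terms are divisible by `T`: shifting such a progression by the position of a word of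
`x × y` gives occurrences of that word, since `y` does not notice shifts by multiples of `T`.

An occurrence at `q` of the prefix of length `L` carries every occurrence `p` of the prefix of
length `m`, with `p + m ≤ L`, to an occurrence `q + p`. Take lengths `L₀ = m`,
`Lₖ₊₁ = Lₖ + aₖ`, where `aₖ` starts a progression of occurrences of the prefix of length `Lₖ`.
Then every block sum `aₖ + ⋯ + aₙ₋₁` is the residue mod `T` of a progression of occurrences of
the prefix of length `m`, and by pigeonhole on the partial sums mod `T` some block sum is `0`.
-/

section

variable {A : Type*} {x : ℕ → A}

def PrefixOccursAt (x : ℕ → A) (m q : ℕ) : Prop := ∀ s < m, x (q + s) = x s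

theorem prefixOccursAt_zero (m : ℕ) : PrefixOccursAt x m 0 := fun s _ => by rw [zero_add]

theorem PrefixOccursAt.add {L m p q : ℕ} (hp : PrefixOccursAt x L p) (hq : PrefixOccursAt x m q)
    (hqm : q + m ≤ L) : PrefixOccursAt x m (p + q) := by
  intro s hs
  rw [add_assoc, hp (q + s) (by omega), hq s hs]

theorem PreciselyAlmostPeriodic.exists_prefixOccursAt_progression
    (hx : PreciselyAlmostPeriodic x) (m : ℕ) :
    ∃ a d : ℕ, 1 ≤ d ∧ ∀ i, PrefixOccursAt x m (a + i * d) := by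
  obtain ⟨a, d, hd, hap⟩ := hx (List.ofFn fun j : Fin m => x j) ⟨0, fun j => by simp⟩
  refine ⟨a, d, hd, fun i s hs => ?_⟩
  simpa using hap i ⟨s, by simpa using hs⟩

def PrefixRecursInClass (x : ℕ → A) {T : ℕ} (m : ℕ) (r : ZMod T) : Prop :=
  ∃ a d : ℕ, 1 ≤ d ∧ ∀ i, PrefixOccursAt x m (a + i * d) ∧ ((a + i * d : ℕ) : ZMod T) = r

namespace PrefixRecursInClass

variable {T : ℕ}

theorem of_progression [NeZero T] {L a d : ℕ} (hd : 1 ≤ d)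
    (hap : ∀ i, PrefixOccursAt x L (a + i * d)) : PrefixRecursInClass x L (a : ZMod T) := by
  refine ⟨a, T * d, Nat.one_le_iff_ne_zero.2 (mul_ne_zero (NeZero.ne T) (by omega)),
    fun i => ⟨by simpa only [← mul_assoc] using hap (i * T), by simp⟩⟩

theorem add {L m q : ℕ} {r : ZMod T} (hr : PrefixRecursInClass x L r)
    (hq : PrefixOccursAt x m q) (hqm : q + m ≤ L) : PrefixRecursInClass x m (r + (q : ZMod T)) := by
  obtain ⟨a, d, hd, hap⟩ := hr
  refine ⟨a + q, d, hd, fun i => ⟨?_, ?_⟩⟩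
  · rw [add_right_comm]
    exact (hap i).1.add hq hqm
  · push_cast [← (hap i).2]
    ring

theorem mono {L m : ℕ} {r : ZMod T} (hr : PrefixRecursInClass x L r) (hmL : m ≤ L) :
    PrefixRecursInClass x m r := by
  simpa using hr.add (prefixOccursAt_zero m) (by omega)

theorem sum_of_chain {L a : ℕ → ℕ} (hocc : ∀ k, PrefixOccursAt x (L k) (a k))
    (hrec : ∀ k, PrefixRecursInClass x (L k) (a k : ZMod T)) (hL : ∀ k, a k + L k ≤ L (k + 1))
    (n k : ℕ) : PrefixRecursInClass x (L k) (∑ j ∈ Finset.range (n + 1), (a (k + j) : ZMod T)) := by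
  induction n generalizing k with
  | zero => simpa using hrec k
  | succ n ih =>
    rw [Finset.sum_range_succ', add_zero]
    simpa only [Nat.add_succ, ← Nat.succ_add] using (ih (k + 1)).add (hocc k) (hL k)

end PrefixRecursInClass

theorem PreciselyAlmostPeriodic.prefixRecursInClass_zero (hx : PreciselyAlmostPeriodic x)
    {T : ℕ} [NeZero T] (m : ℕ) : PrefixRecursInClass x m (0 : ZMod T) := by
  choose a d hd hap using hx.exists_prefixOccursAt_progression
  let L : ℕ → ℕ := fun k => Nat.rec m (fun _ l => l + a l) k
  have hL : ∀ k, a (L k) + L k ≤ L (k + 1) := fun k => (add_comm _ _).le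
  have hrec : ∀ k, PrefixRecursInClass x (L k) (a (L k) : ZMod T) := fun k =>
    PrefixRecursInClass.of_progression (hd (L k)) (hap (L k))
  have hocc : ∀ k, PrefixOccursAt x (L k) (a (L k)) := fun k => by simpa using hap (L k) 0
  have hmono : Monotone L := monotone_nat_of_le_succ fun k => by have := hL k; omega
  let S : ℕ → ZMod T := fun n => ∑ j ∈ Finset.range n, (a (L j) : ZMod T)
  obtain ⟨k, n, hkn, hS⟩ :=
    Set.finite_univ.exists_lt_map_eq_of_forall_mem (f := S) fun _ => Set.mem_univ _
  have hblock : ∑ j ∈ Finset.Ico k n, (a (L j) : ZMod T) = 0 := by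
    rw [Finset.sum_Ico_eq_sub _ hkn.le]
    exact sub_eq_zero.2 hS.symm
  obtain ⟨l, rfl⟩ := Nat.exists_eq_add_of_lt hkn
  rw [Finset.sum_Ico_eq_sum_range, add_assoc, Nat.add_sub_cancel_left] at hblock
  exact (hblock ▸ PrefixRecursInClass.sum_of_chain hocc hrec hL l k).mono (hmono k.zero_le)

theorem occursAt_prod_of_prefixOccursAt {B : Type*} {y : ℕ → B} {T : ℕ}
    (hy : Function.Periodic y T) {u : List (A × B)} {i₀ q : ℕ}
    (hu : occursAt (fun i => (x i, y i)) u i₀) (hq : PrefixOccursAt x (i₀ + u.length) q)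
    (hTq : T ∣ q) : occursAt (fun i => (x i, y i)) u (q + i₀) := by
  intro j
  obtain ⟨c, rfl⟩ := hTq
  have hxj : x (T * c + i₀ + j) = x (i₀ + j) := by
    rw [add_assoc]
    exact hq _ (by omega)
  have hyj : y (T * c + i₀ + j) = y (i₀ + j) := by
    rw [add_assoc, add_comm, mul_comm]
    exact hy.nat_mul c _
  rw [← hu j]
  exact Prod.ext hxj hyj

end

/-- The product of a precisely almost periodic sequence with a periodic
sequence is precisely almost periodic. -/
theorem preciselyAlmostPeriodic_prod_periodic {A B : Type*}
    (x : ℕ → A) (hx : PreciselyAlmostPeriodic x)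
    (y : ℕ → B) (T : ℕ) (hT : 1 ≤ T) (hy : ∀ i, y (i + T) = y i) :
    PreciselyAlmostPeriodic (fun i => (x i, y i)) := by
  rintro u ⟨i₀, hu⟩
  have : NeZero T := ⟨by omega⟩
  obtain ⟨a, d, hd, hap⟩ := hx.prefixRecursInClass_zero (T := T) (i₀ + u.length)
  refine ⟨a + i₀, d, hd, fun i => ?_⟩
  rw [add_right_comm]
  exact occursAt_prod_of_prefixOccursAt hy hu (hap i).1
    ((ZMod.natCast_eq_zero_iff _ _).1 (hap i).2)
end

section
/- There exists an almost periodic binary sequence x such that for every n there is a prefix of x containing n more 0s than 1s, and for every n there is a prefix containing n more 1s than 0s. -/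
/-- The length-`k` prefix of `x`. -/
def prefixWord (x : ℕ → Fin 2) (k : ℕ) : List (Fin 2) :=
  List.ofFn (fun j : Fin k => x (j : ℕ))

/-! Let `x n` be the parity of the number of nonzero base-4 digits of `n`: the fixed point of
the substitution `0 ↦ 0111, 1 ↦ 1000`. Digit counting gives `x (r + 4^k a) = x r + x a` for
`r < 4^k`, so every block of length `4^(k+1)` contains a copy of the prefix of length `4^k`,
which makes `x` almost periodic. With signs `±1` for the letters `0, 1`, the same identity turns
the sign sum over the prefix of length `4^k` into `(1 - 3)^k = (-2)^k`; these sums are unbounded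
in both directions and change by one at each step, so they take every integer value. -/

open Finset

theorem sum_range_mul_eq_sum_sum {M : Type*} [AddCommMonoid M] (f : ℕ → M) (m n : ℕ) :
    ∑ j ∈ range (m * n), f j = ∑ t ∈ range n, ∑ j ∈ range m, f (m * t + j) := by
  induction n with
  | zero => simp
  | succ n ih => rw [Nat.mul_succ, sum_range_add, ih, sum_range_succ]

theorem exists_eq_of_succ_le_add_one (g : ℕ → ℤ) (hstep : ∀ k, g (k + 1) ≤ g k + 1)
    {t : ℤ} (h0 : g 0 ≤ t) {K : ℕ} (hK : t ≤ g K) : ∃ k, g k = t := by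
  induction K with
  | zero => exact ⟨0, le_antisymm h0 hK⟩
  | succ K ih =>
    by_cases h : t ≤ g K
    · exact ih h
    · exact ⟨K + 1, by linarith [hstep K, not_le.mp h]⟩

theorem almostPeriodic_of_forall_prefix_recurs {A : Type*} (x : ℕ → A)
    (h : ∀ m, ∃ L, ∀ i, ∃ j, i ≤ j ∧ j ≤ i + L ∧ ∀ r < m, x (j + r) = x r) :
    AlmostPeriodic x := by
  rintro u ⟨i₀, hu⟩
  obtain ⟨L, hL⟩ := h (i₀ + u.length)
  refine ⟨L + (i₀ + u.length), fun i => ?_⟩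
  obtain ⟨j, hij, hjL, hj⟩ := hL i
  refine ⟨j + i₀, by omega, by omega, fun r => ?_⟩
  rw [add_assoc, hj _ (by omega)]
  exact hu r

def nonzeroDigitParity (b n : ℕ) : Fin 2 :=
  ((Nat.digits b n).map fun d => if d = 0 then 0 else 1).sum

section nonzeroDigitParity

variable {b : ℕ}

@[simp]
theorem nonzeroDigitParity_zero (b : ℕ) : nonzeroDigitParity b 0 = 0 := by
  simp [nonzeroDigitParity]

theorem nonzeroDigitParity_add_mul (hb : 1 < b) {r : ℕ} (hr : r < b) (q : ℕ) :
    nonzeroDigitParity b (r + b * q) = (if r = 0 then 0 else 1) + nonzeroDigitParity b q := by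
  by_cases hrq : r = 0 ∧ q = 0
  · obtain ⟨rfl, rfl⟩ := hrq
    simp
  · rw [nonzeroDigitParity, Nat.digits_add b hb r q hr (by tauto)]
    rfl

theorem nonzeroDigitParity_of_lt (hb : 1 < b) {r : ℕ} (hr : r < b) :
    nonzeroDigitParity b r = if r = 0 then 0 else 1 := by
  simpa using nonzeroDigitParity_add_mul hb hr 0

theorem nonzeroDigitParity_add_pow_mul (hb : 1 < b) (k : ℕ) {r : ℕ} (hr : r < b ^ k) (a : ℕ) :
    nonzeroDigitParity b (r + b ^ k * a) = nonzeroDigitParity b r + nonzeroDigitParity b a := by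
  induction k generalizing r with
  | zero => simp_all
  | succ k ih =>
    have hb0 : 0 < b := by omega
    have hlow := Nat.mod_lt r hb0
    have hhigh : r / b < b ^ k := by
      rw [Nat.div_lt_iff_lt_mul hb0, ← pow_succ]; exact hr
    have hsplit : r + b ^ (k + 1) * a = r % b + b * (r / b + b ^ k * a) := by
      nth_rw 1 [← Nat.mod_add_div r b]; ring
    conv_rhs => rw [← Nat.mod_add_div r b]
    rw [hsplit, nonzeroDigitParity_add_mul hb hlow, nonzeroDigitParity_add_mul hb hlow,
      ih hhigh, add_assoc]

/-- The block `[b^(k+1) t, b^(k+1) (t+1))` starts with the prefix of length `b^k`, complemented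
when the digit parity of `t` is `1`; the complement is undone in the second sub-block of length
`b^k`, whose own digit parity is `1`. -/
theorem nonzeroDigitParity_prefix_recurs (hb : 1 < b) (k t : ℕ) :
    ∃ j, b ^ (k + 1) * t ≤ j ∧ j ≤ b ^ (k + 1) * t + b ^ k ∧
      ∀ r < b ^ k, nonzeroDigitParity b (j + r) = nonzeroDigitParity b r := by
  have hbk : b ^ k < b ^ (k + 1) := Nat.pow_lt_pow_right hb (Nat.lt_succ_self k)
  rcases Fin.exists_fin_two.mp ⟨nonzeroDigitParity b t, rfl⟩ with ht | ht
  · refine ⟨b ^ (k + 1) * t, le_rfl, by omega, fun r hr => ?_⟩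
    rw [add_comm, nonzeroDigitParity_add_pow_mul hb _ (hr.trans hbk), ht, add_zero]
  · refine ⟨b ^ (k + 1) * t + b ^ k, by omega, le_rfl, fun r hr => ?_⟩
    have hr' : r + b ^ k * 1 < b ^ (k + 1) := by
      rw [pow_succ]; nlinarith
    rw [show b ^ (k + 1) * t + b ^ k + r = r + b ^ k * 1 + b ^ (k + 1) * t by ring,
      nonzeroDigitParity_add_pow_mul hb _ hr', nonzeroDigitParity_add_pow_mul hb _ hr,
      nonzeroDigitParity_of_lt hb hb, ht, if_neg one_ne_zero, add_assoc,
      show (1 + 1 : Fin 2) = 0 from rfl, add_zero]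

theorem nonzeroDigitParity_almostPeriodic (hb : 1 < b) :
    AlmostPeriodic (nonzeroDigitParity b) := by
  refine almostPeriodic_of_forall_prefix_recurs _ fun m => ?_
  obtain ⟨k, hk⟩ : ∃ k, m ≤ b ^ k := ⟨m, (Nat.lt_pow_self hb).le⟩
  refine ⟨2 * b ^ (k + 1), fun i => ?_⟩
  obtain ⟨j, hj₁, hj₂, hj⟩ := nonzeroDigitParity_prefix_recurs hb k (i / b ^ (k + 1) + 1)
  have hbk : b ^ k < b ^ (k + 1) := Nat.pow_lt_pow_right hb (Nat.lt_succ_self k)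
  have hdiv := Nat.lt_mul_div_succ i (pow_pos (zero_lt_one.trans hb) (k + 1))
  have hmul := Nat.mul_div_le i (b ^ (k + 1))
  refine ⟨j, by omega, ?_, fun r hr => hj r (by omega)⟩
  rw [mul_add, mul_one] at hj₂
  omega

end nonzeroDigitParity

def finTwoSign (v : Fin 2) : ℤ := (-1) ^ (v : ℕ)

theorem finTwoSign_add (u v : Fin 2) : finTwoSign (u + v) = finTwoSign u * finTwoSign v := by
  fin_cases u <;> fin_cases v <;> rfl

theorem finTwoSign_le_one (v : Fin 2) : finTwoSign v ≤ 1 := by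
  fin_cases v <;> decide

theorem neg_one_le_finTwoSign (v : Fin 2) : -1 ≤ finTwoSign v := by
  fin_cases v <;> decide

theorem count_zero_sub_count_one_prefixWord (x : ℕ → Fin 2) (k : ℕ) :
    ((prefixWord x k).count 0 : ℤ) - (prefixWord x k).count 1 =
      ∑ j ∈ range k, finTwoSign (x j) := by
  induction k with
  | zero => simp [prefixWord]
  | succ k ih =>
    have hsnoc : prefixWord x (k + 1) = prefixWord x k ++ [x k] := by
      rw [prefixWord, List.ofFn_succ_last]
      rfl
    rw [hsnoc, sum_range_succ, ← ih]
    rcases Fin.exists_fin_two.mp ⟨x k, rfl⟩ with hxk | hxk <;>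
      simp [hxk, finTwoSign] <;> ring

theorem sum_finTwoSign_nonzeroDigitParity_range_base {b : ℕ} (hb : 1 < b) :
    ∑ t ∈ range b, finTwoSign (nonzeroDigitParity b t) = 2 - b := by
  obtain ⟨c, rfl⟩ : ∃ c, b = c + 1 := ⟨b - 1, by omega⟩
  rw [sum_range_succ', nonzeroDigitParity_of_lt hb (Nat.succ_pos c)]
  have hrest : ∀ t ∈ range c, finTwoSign (nonzeroDigitParity (c + 1) (t + 1)) = -1 := by
    intro t ht
    rw [nonzeroDigitParity_of_lt hb (by simpa using ht)]
    rfl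
  rw [sum_congr rfl hrest]
  simp [finTwoSign]
  ring

theorem sum_finTwoSign_nonzeroDigitParity_range_pow {b : ℕ} (hb : 1 < b) (k : ℕ) :
    ∑ j ∈ range (b ^ k), finTwoSign (nonzeroDigitParity b j) = (2 - b) ^ k := by
  induction k with
  | zero => simp [finTwoSign]
  | succ k ih =>
    have hblock : ∀ t ∈ range b,
        ∑ j ∈ range (b ^ k), finTwoSign (nonzeroDigitParity b (b ^ k * t + j)) =
          (2 - b) ^ k * finTwoSign (nonzeroDigitParity b t) := by
      intro t _
      simp_rw [add_comm (b ^ k * t), ← ih, sum_mul]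
      refine sum_congr rfl fun j hj => ?_
      rw [nonzeroDigitParity_add_pow_mul hb k (mem_range.mp hj), finTwoSign_add]
    rw [pow_succ, sum_range_mul_eq_sum_sum, sum_congr rfl hblock, ← mul_sum,
      sum_finTwoSign_nonzeroDigitParity_range_base hb, pow_succ]

theorem exists_prefixWord_count_zero_eq (x : ℕ → Fin 2)
    (hx : ∀ n : ℕ, ∃ k, (n : ℤ) ≤ ∑ j ∈ range k, finTwoSign (x j)) (n : ℕ) :
    ∃ k, (prefixWord x k).count 0 = (prefixWord x k).count 1 + n := by
  obtain ⟨K, hK⟩ := hx n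
  obtain ⟨k, hk⟩ := exists_eq_of_succ_le_add_one (fun k => ∑ j ∈ range k, finTwoSign (x j))
    (fun k => by simpa [sum_range_succ] using finTwoSign_le_one (x k)) (by simp) hK
  refine ⟨k, ?_⟩
  have := count_zero_sub_count_one_prefixWord x k
  omega

theorem exists_prefixWord_count_one_eq (x : ℕ → Fin 2)
    (hx : ∀ n : ℕ, ∃ k, ∑ j ∈ range k, finTwoSign (x j) ≤ -n) (n : ℕ) :
    ∃ k, (prefixWord x k).count 1 = (prefixWord x k).count 0 + n := by
  obtain ⟨K, hK⟩ := hx n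
  obtain ⟨k, hk⟩ := exists_eq_of_succ_le_add_one (fun k => -∑ j ∈ range k, finTwoSign (x j))
    (fun k => by linarith [sum_range_succ (fun j => finTwoSign (x j)) k,
      neg_one_le_finTwoSign (x k)]) (t := n) (by simp) (le_neg.mpr hK)
  refine ⟨k, ?_⟩
  have := count_zero_sub_count_one_prefixWord x k
  omega

/-- There is an almost periodic binary sequence with prefixes having an excess
of `n` zeros over ones, and prefixes with an excess of `n` ones over zeros,
for every `n`. -/
theorem exists_almostPeriodic_alternating_excess :
    ∃ x : ℕ → Fin 2, AlmostPeriodic x ∧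
      (∀ n : ℕ, ∃ k : ℕ,
        (prefixWord x k).count 0 = (prefixWord x k).count 1 + n) ∧
      (∀ n : ℕ, ∃ k : ℕ,
        (prefixWord x k).count 1 = (prefixWord x k).count 0 + n) := by
  have hb : 1 < 4 := by norm_num
  have hn : ∀ n : ℕ, (n : ℤ) ≤ 4 ^ n := fun n => by exact_mod_cast (Nat.lt_pow_self hb).le
  refine ⟨nonzeroDigitParity 4, nonzeroDigitParity_almostPeriodic hb,
    exists_prefixWord_count_zero_eq _ fun n => ⟨4 ^ (2 * n), ?_⟩,
    exists_prefixWord_count_one_eq _ fun n => ⟨4 ^ (2 * n + 1), ?_⟩⟩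
  · rw [sum_finTwoSign_nonzeroDigitParity_range_pow hb, pow_mul]
    norm_num
    exact hn n
  · rw [sum_finTwoSign_nonzeroDigitParity_range_pow hb, pow_succ, pow_mul]
    norm_num
    linarith [hn n]
end

section
/- Every Sturmian sequence (lower mechanical sequence with irrational slope) is almost periodic. -/
open Filter Topology Set

theorem Irrational.exists_nat_int_abs_mul_sub_lt {α : ℝ} (hα : Irrational α) {ε : ℝ}
    (hε : 0 < ε) : ∃ (m : ℕ) (p : ℤ), 0 < m ∧ m * α - p ≠ 0 ∧ |m * α - p| < ε := by
  obtain ⟨n, hn⟩ := exists_nat_gt ε⁻¹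
  have hn0 : 0 < n := by exact_mod_cast (inv_pos.2 hε).trans hn
  obtain ⟨p, m, hm0, -, hm⟩ := Real.exists_int_int_abs_mul_sub_le α hn0
  lift m to ℕ using hm0.le
  refine ⟨m, p, by exact_mod_cast hm0, ?_, hm.trans_lt ?_⟩
  · exact sub_ne_zero.2 ((hα.natCast_mul (by exact_mod_cast hm0.ne')).ne_int p)
  · rw [one_div]
    exact inv_lt_of_inv_lt₀ hε (hn.trans (lt_add_one _))

theorem Int.fract_le_sub_of_intCast_le {R : Type*} [Ring R] [LinearOrder R]
    [IsOrderedRing R] [FloorRing R] {a : R} {n : ℤ} (h : (n : R) ≤ a) :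
    Int.fract a ≤ a - n := by
  rw [Int.fract]
  exact sub_le_sub_left (Int.cast_le.2 (Int.le_floor.2 h)) a

theorem exists_nat_le_fract_add_mul_lt (x : ℝ) {σ : ℝ} (hσ : σ ≠ 0) :
    ∃ k : ℕ, k ≤ ⌈|σ|⁻¹⌉₊ ∧ Int.fract (x + k * σ) < |σ| := by
  have h0 := Int.fract_nonneg x
  have h1 := Int.fract_lt_one x
  have hx : x = ⌊x⌋ + Int.fract x := (Int.floor_add_fract x).symm
  rcases hσ.lt_or_gt with hneg | hpos
  · -- the last point of `x + k * σ` not below `⌊x⌋` lies within `|σ|` above it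
    have hpos : 0 < -σ := neg_pos.2 hneg
    rw [abs_of_neg hneg]
    set k := ⌊Int.fract x / -σ⌋₊
    have hk : k * -σ ≤ Int.fract x := (le_div_iff₀ hpos).1 (Nat.floor_le (by positivity))
    have hk' : Int.fract x < (k + 1) * -σ := (div_lt_iff₀ hpos).1 (Nat.lt_floor_add_one _)
    refine ⟨k, (Nat.floor_le_ceil _).trans' (Nat.floor_mono ?_), ?_⟩
    · rw [← one_div]; gcongr
    · have := Int.fract_le_sub_of_intCast_le (a := x + k * σ) (n := ⌊x⌋) (by linarith)
      linarith
  · -- the first point of `x + k * σ` not below `⌊x⌋ + 1` lies within `σ` above it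
    rw [abs_of_pos hpos]
    set k := ⌈(1 - Int.fract x) / σ⌉₊
    have hk : 1 - Int.fract x ≤ k * σ := (div_le_iff₀ hpos).1 (Nat.le_ceil _)
    have hk' : (k - 1) * σ < 1 - Int.fract x :=
      (lt_div_iff₀ hpos).1 (sub_lt_iff_lt_add.2 (Nat.ceil_lt_add_one (by
        have : 0 ≤ 1 - Int.fract x := by linarith
        positivity)))
    refine ⟨k, Nat.ceil_mono ?_, ?_⟩
    · rw [← one_div]; gcongr; linarith
    · have := Int.fract_le_sub_of_intCast_le (a := x + k * σ) (n := ⌊x⌋ + 1)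
        (by push_cast; linarith)
      push_cast at this
      linarith

theorem Irrational.exists_bounded_gap_fract_mul_add_lt {α : ℝ} (hα : Irrational α) (θ : ℝ) {ε : ℝ}
    (hε : 0 < ε) :
    ∃ l : ℕ, ∀ i : ℕ, ∃ j : ℕ, i ≤ j ∧ j ≤ i + l ∧ Int.fract (α * j + θ) < ε := by
  obtain ⟨m, p, -, hσ, hσε⟩ := hα.exists_nat_int_abs_mul_sub_lt hε
  refine ⟨⌈|m * α - p|⁻¹⌉₊ * m, fun i => ?_⟩
  obtain ⟨k, hk, hfract⟩ := exists_nat_le_fract_add_mul_lt (α * i + θ) hσ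
  refine ⟨i + k * m, by omega, by gcongr, ?_⟩
  have : α * ↑(i + k * m) + θ = α * i + θ + k * (m * α - p) + (k * p : ℤ) := by
    push_cast; ring
  rw [this, Int.fract_add_intCast]
  exact hfract.trans hσε

theorem tendsto_add_const_nhdsGE (x c : ℝ) : Tendsto (· + c) (𝓝[≥] x) (𝓝[≥] (x + c)) :=
  (continuous_add_const c).continuousWithinAt.tendsto_nhdsWithin (Ici_add_bij x c).mapsTo

section RotationCoding

variable {A : Type*} {f : ℝ → A} {α : ℝ}

def wordStarts (f : ℝ → A) (α : ℝ) (u : List A) : Set ℝ :=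
  {x | ∀ j : Fin u.length, f (x + j * α) = u.get j}

theorem occursAt_comp_iff_mem_wordStarts (ρ : ℝ) (u : List A) (i : ℕ) :
    occursAt (fun n : ℕ => f (α * n + ρ)) u i ↔ α * i + ρ ∈ wordStarts f α u := by
  refine forall_congr' fun j => ?_
  show f (α * ((i + j : ℕ) : ℝ) + ρ) = _ ↔ _
  rw [show α * ((i + j : ℕ) : ℝ) + ρ = α * i + ρ + j * α by push_cast; ring]

theorem Function.Periodic.add_intCast_mem_wordStarts (hf : Function.Periodic f 1)
    {u : List A} {x : ℝ} (hx : x ∈ wordStarts f α u) (n : ℤ) :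
    x + n ∈ wordStarts f α u := fun j => by
  rw [add_right_comm, ← mul_one (n : ℝ), hf.int_mul n, hx j]

theorem wordStarts_mem_nhdsGE (hf : ∀ x, ∀ᶠ y in 𝓝[≥] x, f y = f x) {u : List A} {x : ℝ}
    (hx : x ∈ wordStarts f α u) : wordStarts f α u ∈ 𝓝[≥] x := by
  have h : ∀ᶠ y in 𝓝[≥] x, ∀ j : Fin u.length, f (y + j * α) = f (x + j * α) :=
    eventually_all.2 fun j => (tendsto_add_const_nhdsGE x _).eventually (hf _)
  exact h.mono fun y hy j => (hy j).trans (hx j)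

theorem almostPeriodic_comp_mul_add (hper : Function.Periodic f 1)
    (hf : ∀ x, ∀ᶠ y in 𝓝[≥] x, f y = f x) (hα : Irrational α) (ρ : ℝ) :
    AlmostPeriodic fun n : ℕ => f (α * n + ρ) := by
  rintro u ⟨i₀, hi₀⟩
  set x₀ := α * i₀ + ρ
  rw [occursAt_comp_iff_mem_wordStarts] at hi₀
  obtain ⟨b, hb, hIco⟩ := mem_nhdsGE_iff_exists_Ico_subset.1 (wordStarts_mem_nhdsGE hf hi₀)
  obtain ⟨l, hl⟩ := hα.exists_bounded_gap_fract_mul_add_lt (ρ - x₀) (sub_pos.2 hb)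
  refine ⟨l + u.length, fun i => ?_⟩
  obtain ⟨j, hij, hjl, hj⟩ := hl i
  refine ⟨j, hij, by omega, (occursAt_comp_iff_mem_wordStarts ρ u j).2 ?_⟩
  have hsplit : α * j + ρ = x₀ + Int.fract (α * j + (ρ - x₀)) + ⌊α * j + (ρ - x₀)⌋ := by
    rw [Int.fract]; ring
  rw [hsplit]
  refine hper.add_intCast_mem_wordStarts (hIco ⟨?_, ?_⟩) _
  · linarith [Int.fract_nonneg (α * j + (ρ - x₀))]
  · linarith

end RotationCoding

theorem periodic_floor_add_sub_floor (α : ℝ) :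
    Function.Periodic (fun x : ℝ => ⌊x + α⌋ - ⌊x⌋) 1 := by
  intro x
  simp only [add_right_comm x 1 α, Int.floor_add_one]
  ring

theorem eventually_floor_add_sub_floor_eq (α x : ℝ) :
    ∀ᶠ y in 𝓝[≥] x, ⌊y + α⌋ - ⌊y⌋ = ⌊x + α⌋ - ⌊x⌋ := by
  have h := (tendsto_add_const_nhdsGE x α).eventually
    (tendsto_pure.1 (tendsto_floor_right_pure_floor (x + α)))
  filter_upwards [h, tendsto_pure.1 (tendsto_floor_right_pure_floor x)] with y h₁ h₂
  rw [h₁, h₂]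

theorem sturmian_almostPeriodic_general (α ρ : ℝ) (hirr : Irrational α) :
    AlmostPeriodic (fun n : ℕ => ⌊α * ((n : ℝ) + 1) + ρ⌋ - ⌊α * (n : ℝ) + ρ⌋) := by
  have h := almostPeriodic_comp_mul_add (periodic_floor_add_sub_floor α)
    (eventually_floor_add_sub_floor_eq α) hirr ρ
  convert h using 3 with n
  ring_nf

/-- Every Sturmian (lower mechanical with irrational slope) sequence is
almost periodic. -/
theorem sturmian_almostPeriodic (α ρ : ℝ) (hirr : Irrational α)
    (hα0 : 0 < α) (hα1 : α < 1) (hρ0 : 0 ≤ ρ) (hρ1 : ρ < 1) :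
    AlmostPeriodic (fun n : ℕ => ⌊α * ((n : ℝ) + 1) + ρ⌋ - ⌊α * (n : ℝ) + ρ⌋) :=
  sturmian_almostPeriodic_general α ρ hirr
end

section
/- For every sequence x over a finite alphabet, the Kolmogorov-complexity entropy E_k(x) = lim_{n→∞} (1/n)·max{K(u) : u a factor of x of length n} exists and equals the topological entropy E_t(x) = lim_{n→∞} (1/n)·log(p_x(n)). -/
/-!
Cut a factor of length `n` into `n / m + 1` consecutive blocks of length `m`, pad the last one,
and code each block by a `⌊log₂ p_x(m)⌋ + 1`-bit index into the list of factors of length `m`.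
For fixed `m` this is a computable decoding scheme, so by optimality of `D` every factor of
length `n` has `K ≤ C_m + n (log₂ p_x(m) + 1) / m`. Conversely, distinct factors have distinct
shortest descriptions and there are fewer than `2 ^ (M + 1)` bit strings of length at most `M`,
so `log₂ p_x(n) ≤ max K + 1`. As `log₂ p_x` is subadditive, `log₂ p_x(n) / n` converges
(Fekete), and the two bounds squeeze `max K / n` to the same limit.
-/

open Filter

/-- Kolmogorov complexity of `u` relative to the decoder `D`:
the least length of a binary description of `u`. -/
noncomputable def kolmComplexity {A : Type*} (D : List Bool → Option (List A))
    (u : List A) : ℕ :=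
  sInf {m : ℕ | ∃ p : List Bool, p.length = m ∧ D p = some u}

/-- The maximal Kolmogorov complexity of a length-`n` factor of `x`. -/
noncomputable def maxFactorComplexity {A : Type*} (D : List Bool → Option (List A))
    (x : ℕ → A) (n : ℕ) : ℕ :=
  sSup {m : ℕ | ∃ u : List A, u.length = n ∧ (∃ i, occursAt x u i) ∧
    m = kolmComplexity D u}

namespace KolmogorovEntropy

section Factors

variable {A : Type*} (x : ℕ → A)

def window (i n : ℕ) : List A := List.ofFn fun j : Fin n => x (i + j)

@[simp] lemma length_window (i n : ℕ) : (window x i n).length = n := List.length_ofFn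

@[simp] lemma getElem_window (i n j : ℕ) (h : j < (window x i n).length) :
    (window x i n)[j] = x (i + j) := by
  simp [window]

lemma window_add (i a b : ℕ) : window x i (a + b) = window x i a ++ window x (i + a) b := by
  simp [window, List.ofFn_add, add_assoc]

lemma take_window {t n : ℕ} (i : ℕ) (h : t ≤ n) : (window x i n).take t = window x i t := by
  rw [← Nat.add_sub_cancel' h, window_add, List.take_left' (length_window x i t)]

lemma flatten_map_window (i m k : ℕ) :
    ((List.range k).map fun j => window x (i + j * m) m).flatten = window x i (k * m) := by
  induction k with
  | zero => simp [window]
  | succ k ih =>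
    rw [List.range_succ, List.map_append, List.flatten_append, ih, Nat.succ_mul, window_add]
    simp

lemma occursAt_window (i n : ℕ) : occursAt x (window x i n) i := fun j => by simp

lemma occursAt_iff_window_eq {u : List A} {i : ℕ} :
    occursAt x u i ↔ window x i u.length = u := by
  refine ⟨fun h => List.ext_getElem (by simp) fun j _ hj => by simpa using h ⟨j, hj⟩,
    fun h => ?_⟩
  rw [← h]
  exact occursAt_window x i _

def factors (n : ℕ) : Set (List A) := Set.range fun i => window x i n

lemma factors_eq_setOf (n : ℕ) : factors x n = {u | u.length = n ∧ ∃ i, occursAt x u i} := by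
  ext u
  simp only [factors, Set.mem_range, occursAt_iff_window_eq]
  constructor
  · rintro ⟨i, rfl⟩
    exact ⟨length_window x i n, i, by rw [length_window]⟩
  · rintro ⟨rfl, i, hi⟩
    exact ⟨i, hi⟩

lemma subwordComplexity_eq_ncard (n : ℕ) : subwordComplexity x n = (factors x n).ncard := by
  rw [factors_eq_setOf]
  rfl

lemma maxFactorComplexity_eq_sSup (D : List Bool → Option (List A)) (n : ℕ) :
    maxFactorComplexity D x n = sSup (kolmComplexity D '' factors x n) := by
  rw [factors_eq_setOf, maxFactorComplexity]
  congr 1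
  ext m
  simp only [Set.mem_image]
  constructor
  · rintro ⟨u, hn, hi, rfl⟩
    exact ⟨u, ⟨hn, hi⟩, rfl⟩
  · rintro ⟨u, ⟨hn, hi⟩, rfl⟩
    exact ⟨u, hn, hi, rfl⟩

lemma factors_add_subset (a b : ℕ) :
    factors x (a + b) ⊆ (fun p => p.1 ++ p.2) '' (factors x a ×ˢ factors x b) := by
  rintro _ ⟨i, rfl⟩
  exact ⟨(window x i a, window x (i + a) b), ⟨⟨i, rfl⟩, ⟨i + a, rfl⟩⟩,
    (window_add x i a b).symm⟩

variable [Finite A]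

lemma finite_factors (n : ℕ) : (factors x n).Finite :=
  (List.finite_length_eq A n).subset <| Set.range_subset_iff.2 fun i => length_window x i n

lemma subwordComplexity_pos (n : ℕ) : 0 < subwordComplexity x n := by
  rw [subwordComplexity_eq_ncard]
  exact (Set.ncard_pos (finite_factors x n)).2 (Set.range_nonempty _)

lemma subwordComplexity_add_le (a b : ℕ) :
    subwordComplexity x (a + b) ≤ subwordComplexity x a * subwordComplexity x b := by
  have hfin := (finite_factors x a).prod (finite_factors x b)
  simp only [subwordComplexity_eq_ncard, ← Set.ncard_prod]
  exact (Set.ncard_le_ncard (factors_add_subset x a b) (hfin.image _)).trans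
    (Set.ncard_image_le hfin)

end Factors

section Descriptions

variable {β : Type*}

lemma ncard_setOf_length_eq (α : Type*) [Fintype α] (n : ℕ) :
    {l : List α | l.length = n}.ncard = Fintype.card α ^ n := by
  rw [← Nat.card_coe_set_eq, ← card_vector, ← Nat.card_eq_fintype_card]
  rfl

lemma ncard_setOf_length_lt_lt (n : ℕ) : {l : List Bool | l.length < n}.ncard < 2 ^ n := by
  have hunion : {l : List Bool | l.length < n} = ⋃ k ∈ Finset.range n, {l | l.length = k} := by
    ext
    simp
  calc {l : List Bool | l.length < n}.ncard ≤ ∑ k ∈ Finset.range n, 2 ^ k := by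
        rw [hunion]
        refine (Finset.set_ncard_biUnion_le _ _).trans_eq ?_
        simp [ncard_setOf_length_eq]
    _ < 2 ^ n := by
        rw [Nat.geomSum_eq le_rfl]
        have := Nat.one_le_two_pow (n := n)
        omega

lemma ncard_lt_two_pow_of_forall_exists_length_lt (D : List Bool → Option β) {S : Set β}
    {n : ℕ} (hS : ∀ u ∈ S, ∃ p : List Bool, p.length < n ∧ D p = some u) :
    S.ncard < 2 ^ n := by
  have hfin := List.finite_length_lt Bool n
  calc S.ncard = (some '' S).ncard :=
        (Set.ncard_image_of_injective _ (Option.some_injective _)).symm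
    _ ≤ (D '' {p : List Bool | p.length < n}).ncard := by
        refine Set.ncard_le_ncard ?_ (hfin.image D)
        rintro _ ⟨u, hu, rfl⟩
        obtain ⟨p, hp, hDp⟩ := hS u hu
        exact ⟨p, hp, hDp⟩
    _ ≤ {p : List Bool | p.length < n}.ncard := Set.ncard_image_le hfin
    _ < 2 ^ n := ncard_setOf_length_lt_lt n

variable {A : Type*} {D : List Bool → Option (List A)} {u : List A}

lemma kolmComplexity_le_length {p : List Bool} (h : D p = some u) :
    kolmComplexity D u ≤ p.length :=
  Nat.sInf_le ⟨p, rfl, h⟩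

lemma exists_length_eq_kolmComplexity (h : ∃ p, D p = some u) :
    ∃ p, D p = some u ∧ p.length = kolmComplexity D u := by
  obtain ⟨p₀, hp₀⟩ := h
  obtain ⟨p, hlen, hp⟩ := Nat.sInf_mem (⟨p₀.length, p₀, rfl, hp₀⟩ :
    {m | ∃ p : List Bool, p.length = m ∧ D p = some u}.Nonempty)
  exact ⟨p, hp, hlen⟩

variable (x : ℕ → A)

lemma maxFactorComplexity_le {n B : ℕ} (h : ∀ u ∈ factors x n, kolmComplexity D u ≤ B) :
    maxFactorComplexity D x n ≤ B := by
  rw [maxFactorComplexity_eq_sSup]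
  exact csSup_le ((Set.range_nonempty _).image _) (Set.forall_mem_image.2 h)

lemma kolmComplexity_le_maxFactorComplexity [Finite A] {n : ℕ} (hu : u ∈ factors x n) :
    kolmComplexity D u ≤ maxFactorComplexity D x n := by
  rw [maxFactorComplexity_eq_sSup]
  exact le_csSup ((finite_factors x n).image _).bddAbove (Set.mem_image_of_mem _ hu)

lemma subwordComplexity_lt_two_pow [Finite A] {n : ℕ}
    (hD : ∀ u ∈ factors x n, ∃ p, D p = some u) :
    subwordComplexity x n < 2 ^ (maxFactorComplexity D x n + 1) := by
  rw [subwordComplexity_eq_ncard]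
  refine ncard_lt_two_pow_of_forall_exists_length_lt D fun u hu => ?_
  obtain ⟨p, hp, hlen⟩ := exists_length_eq_kolmComplexity (hD u hu)
  exact ⟨p, hlen ▸ Nat.lt_succ_of_le (kolmComplexity_le_maxFactorComplexity x hu), hp⟩

end Descriptions

section BlockCode

open Primrec

variable {α A : Type*}

def chunks (w : ℕ) (l : List α) : List (List α) :=
  (List.range (l.length / w)).map fun i => (l.drop (i * w)).take w

lemma chunks_append {w : ℕ} (hw : 0 < w) {c : List α} (hc : c.length = w) (l : List α) :
    chunks w (c ++ l) = c :: chunks w l := by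
  simp only [chunks, List.length_append, hc, Nat.add_div_left _ hw, List.range_succ_eq_map,
    List.map_cons, List.map_map]
  refine congrArg₂ _ (by simp [← hc]) (List.map_congr_left fun i _ => ?_)
  rw [Function.comp_apply, Nat.succ_mul, Nat.add_comm, ← List.drop_drop, ← hc, List.drop_left]

lemma chunks_flatten {w : ℕ} (hw : 0 < w) {cs : List (List α)}
    (hcs : ∀ c ∈ cs, c.length = w) : chunks w cs.flatten = cs := by
  induction cs with
  | nil => simp [chunks]
  | cons c cs ih =>
    rw [List.flatten_cons, chunks_append hw (hcs c (by simp)),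
      ih fun c hc => hcs c (List.mem_cons_of_mem _ hc)]

/-- A program consists of `pad` ones, a zero, and a sequence of `w`-bit codewords; it describes
the concatenation of the decoded codewords with its last `pad` letters removed. -/
def blockDecoder (dict : List Bool → List A) (w : ℕ) (p : List Bool) : Option (List A) :=
  let pad := (p.takeWhile id).length
  let blocks := ((chunks w (p.drop (pad + 1))).map dict).flatten
  some (blocks.take (blocks.length - pad))

lemma blockDecoder_replicate_append (dict : List Bool → List A) {w : ℕ} (hw : 0 < w)
    (pad : ℕ) {cs : List (List Bool)} (hcs : ∀ c ∈ cs, c.length = w) :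
    blockDecoder dict w (List.replicate pad true ++ false :: cs.flatten) =
      some (((cs.map dict).flatten).take ((cs.map dict).flatten.length - pad)) := by
  have hpad : (List.replicate pad true ++ false :: cs.flatten).takeWhile id =
      List.replicate pad true := by
    induction pad with
    | zero => rfl
    | succ pad ih => simp [List.replicate_succ, ih]
  have hdrop :
      (List.replicate pad true ++ false :: cs.flatten).drop (pad + 1) = cs.flatten := by
    induction pad with
    | zero => rfl
    | succ pad ih => simpa [List.replicate_succ] using ih
  simp only [blockDecoder, hpad, List.length_replicate, hdrop, chunks_flatten hw hcs]

lemma primrec_chunks [Primcodable α] (w : ℕ) : Primrec (chunks (α := α) w) :=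
  list_map (list_range.comp (nat_div.comp list_length (const w)))
    (list_take.comp (const w) (list_drop.comp (nat_mul.comp snd (const w)) fst)).to₂

lemma primrec_blockDecoder [Primcodable A] {dict : List Bool → List A} (hdict : Primrec dict)
    (w : ℕ) : Primrec (blockDecoder dict w) := by
  have hpad : Primrec fun p : List Bool => (p.takeWhile id).length :=
    list_length.comp (list_takeWhile Primrec.id)
  have hblocks : Primrec fun p : List Bool =>
      ((chunks w (p.drop ((p.takeWhile id).length + 1))).map dict).flatten :=
    list_flatten.comp (list_map ((primrec_chunks w).comp
      (list_drop.comp (nat_add.comp hpad (const 1)) Primrec.id)) (hdict.comp snd).to₂)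
  exact option_some.comp
    (list_take.comp (nat_sub.comp (list_length.comp hblocks) hpad) hblocks)

lemma exists_primrec_dict [Primcodable A] {S : Set (List A)} (hS : S.Finite) {w : ℕ}
    (hw : S.ncard ≤ 2 ^ w) :
    ∃ dict : List Bool → List A, Primrec dict ∧
      ∀ v ∈ S, ∃ c : List Bool, c.length = w ∧ dict c = v := by
  classical
  let words := hS.toFinset.toList
  let codes := (Finset.univ : Finset (List.Vector Bool w)).toList.map List.Vector.toList
  have hcodes : codes.Nodup := (Finset.nodup_toList _).map List.Vector.toList_injective
  have hlen : words.length ≤ codes.length := by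
    simpa [words, codes, ← Set.ncard_eq_toFinset_card S hS] using hw
  refine ⟨fun c => words.getD (codes.idxOf c) [],
    ((list_getD []).comp (const words) (list_idxOf₁ codes)).of_eq fun c => by congr!,
    fun v hv => ?_⟩
  have hvw : words.idxOf v < words.length :=
    List.idxOf_lt_length_iff.2 (by simpa [words] using hv)
  refine ⟨codes[words.idxOf v], by simp [codes], ?_⟩
  dsimp only
  rw [hcodes.idxOf_getElem, List.getD_eq_getElem _ _ hvw, List.getElem_idxOf]

end BlockCode

section FactorDescriptions

variable {A : Type*} (x : ℕ → A)

lemma exists_blockDecoder_eq_window (dict : List Bool → List A) {m w : ℕ} (hm : 0 < m)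
    (hw : 0 < w) (hdict : ∀ v ∈ factors x m, ∃ c : List Bool, c.length = w ∧ dict c = v)
    (i n : ℕ) :
    ∃ p, blockDecoder dict w p = some (window x i n) ∧
      p.length ≤ m + 1 + (n / m + 1) * w := by
  set k := n / m + 1
  choose code hcode_len hcode using fun j => hdict (window x (i + j * m) m) ⟨_, rfl⟩
  have hn : n < k * m := by simpa [k, Nat.succ_mul] using Nat.lt_div_mul_add (a := n) hm
  have hkm : k * m ≤ n + m := by simpa [k, Nat.succ_mul] using Nat.div_mul_le_self n m
  set cs := (List.range k).map code
  have hcs : ∀ c ∈ cs, c.length = w := by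
    simp only [cs, List.mem_map]
    rintro _ ⟨j, -, rfl⟩
    exact hcode_len j
  have hblocks : (cs.map dict).flatten = window x i (k * m) := by
    simp only [cs, List.map_map, Function.comp_def, hcode, flatten_map_window]
  refine ⟨List.replicate (k * m - n) true ++ false :: cs.flatten, ?_, ?_⟩
  · rw [blockDecoder_replicate_append dict hw _ hcs, hblocks, length_window,
      Nat.sub_sub_self hn.le, take_window x i hn.le]
  · have hlen : (List.map (List.length ∘ code) (List.range k)).sum = k * w := by
      simp [Function.comp_def, hcode_len]
    simp only [List.length_append, List.length_replicate, List.length_cons, List.length_flatten,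
      cs, List.map_map, hlen]
    omega

variable [Primcodable A]

def IsAdditivelyOptimal (D : List Bool → Option (List A)) : Prop :=
  ∀ D' : List Bool → Option (List A), Computable D' →
    ∃ C : ℕ, ∀ (p' : List Bool) (u : List A), D' p' = some u →
      ∃ p : List Bool, D p = some u ∧ p.length ≤ p'.length + C

variable [Finite A]

lemma exists_computable_factor_decoder {m : ℕ} (hm : 0 < m) :
    ∃ D' : List Bool → Option (List A), Computable D' ∧ ∀ n, ∀ u ∈ factors x n, ∃ p,
      D' p = some u ∧
        p.length ≤ m + 1 + (n / m + 1) * (Nat.log 2 (subwordComplexity x m) + 1) := by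
  have hcard : (factors x m).ncard ≤ 2 ^ (Nat.log 2 (subwordComplexity x m) + 1) :=
    subwordComplexity_eq_ncard x m ▸ (Nat.lt_pow_succ_log_self one_lt_two _).le
  obtain ⟨dict, hdict, hcodes⟩ := exists_primrec_dict (finite_factors x m) hcard
  refine ⟨blockDecoder dict (Nat.log 2 (subwordComplexity x m) + 1),
    (primrec_blockDecoder hdict _).to_comp, ?_⟩
  rintro n _ ⟨i, rfl⟩
  exact exists_blockDecoder_eq_window x dict hm (Nat.succ_pos _) hcodes i n

variable {D : List Bool → Option (List A)}

lemma exists_description_of_mem_factors (hD : IsAdditivelyOptimal D) {m : ℕ} (hm : 0 < m) :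
    ∃ C, ∀ n, ∀ u ∈ factors x n, ∃ p, D p = some u ∧
      p.length ≤ C + (n / m + 1) * (Nat.log 2 (subwordComplexity x m) + 1) := by
  obtain ⟨D', hD', hdesc⟩ := exists_computable_factor_decoder x hm
  obtain ⟨C, hC⟩ := hD D' hD'
  refine ⟨m + 1 + C, fun n u hu => ?_⟩
  obtain ⟨p', hp', hlen'⟩ := hdesc n u hu
  obtain ⟨p, hp, hlen⟩ := hC p' u hp'
  exact ⟨p, hp, by omega⟩

lemma logb_subwordComplexity_le (hD : IsAdditivelyOptimal D) (n : ℕ) :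
    Real.logb 2 (subwordComplexity x n) ≤ maxFactorComplexity D x n + 1 := by
  obtain ⟨C, hC⟩ := exists_description_of_mem_factors x hD one_pos
  have hlt := subwordComplexity_lt_two_pow (D := D) x fun u hu =>
    (hC n u hu).imp fun _ => And.left
  rw [Real.logb_le_iff_le_rpow one_lt_two (by exact_mod_cast subwordComplexity_pos x n)]
  exact_mod_cast hlt.le

lemma maxFactorComplexity_le_affine (hD : IsAdditivelyOptimal D) {m : ℕ} (hm : 0 < m) :
    ∃ C : ℝ, ∀ n : ℕ, (maxFactorComplexity D x n : ℝ) ≤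
      C + n * ((Real.logb 2 (subwordComplexity x m) + 1) / m) := by
  obtain ⟨C, hC⟩ := exists_description_of_mem_factors x hD hm
  set ℓ := Real.logb 2 (subwordComplexity x m)
  have hw : (Nat.log 2 (subwordComplexity x m) : ℝ) ≤ ℓ := by
    exact_mod_cast Real.natLog_le_logb (subwordComplexity x m) 2
  refine ⟨C + ℓ + 1, fun n => ?_⟩
  have hnat : maxFactorComplexity D x n ≤
      C + (n / m + 1) * (Nat.log 2 (subwordComplexity x m) + 1) :=
    maxFactorComplexity_le x fun u hu =>
      let ⟨p, hp, hlen⟩ := hC n u hu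
      (kolmComplexity_le_length hp).trans hlen
  have hdiv : ((n / m : ℕ) : ℝ) ≤ n / m := Nat.cast_div_le
  calc (maxFactorComplexity D x n : ℝ)
      ≤ C + ((n / m : ℕ) + 1) * (Nat.log 2 (subwordComplexity x m) + 1) := by
        exact_mod_cast hnat
    _ ≤ C + (n / m + 1) * (ℓ + 1) := by gcongr
    _ = C + ℓ + 1 + n * ((ℓ + 1) / m) := by field_simp; ring

end FactorDescriptions

section Entropy

open Topology

lemma tendsto_div_of_le_add_one_of_eventually_le {f g r : ℕ → ℝ} {E : ℝ}
    (hf : Tendsto (fun n : ℕ => f n / n) atTop (𝓝 E)) (hr : Tendsto r atTop (𝓝 E))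
    (hlow : ∀ n, f n ≤ g n + 1)
    (hup : ∀ᶠ m in atTop, ∃ C, ∀ n : ℕ, g n ≤ C + n * r m) :
    Tendsto (fun n : ℕ => g n / n) atTop (𝓝 E) := by
  refine tendsto_order.2 ⟨fun b hb => ?_, fun b hb => ?_⟩
  · have hf' : Tendsto (fun n : ℕ => (f n - 1) / n) atTop (𝓝 E) := by
      simpa [sub_div] using hf.sub tendsto_one_div_atTop_nhds_zero_nat
    filter_upwards [hf'.eventually_const_lt hb] with n hn
    exact hn.trans_le (div_le_div_of_nonneg_right (by linarith [hlow n]) n.cast_nonneg)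
  · obtain ⟨m, hm, C, hC⟩ := ((hr.eventually_lt_const hb).and hup).exists
    have hlim : Tendsto (fun n : ℕ => C / n + r m) atTop (𝓝 (r m)) := by
      simpa using (tendsto_const_div_atTop_nhds_zero_nat C).add_const (r m)
    filter_upwards [hlim.eventually_lt_const hm, eventually_gt_atTop 0] with n hn hn0
    calc g n / n ≤ (C + n * r m) / n := div_le_div_of_nonneg_right (hC n) n.cast_nonneg
      _ = C / n + r m := by field_simp
      _ < b := hn

variable {A : Type*} [Finite A] (x : ℕ → A)

lemma subadditive_logb_subwordComplexity :
    Subadditive fun n => Real.logb 2 (subwordComplexity x n) := fun a b => by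
  have hpos := subwordComplexity_pos x
  rw [← Real.logb_mul (by exact_mod_cast (hpos a).ne') (by exact_mod_cast (hpos b).ne')]
  exact Real.logb_le_logb_of_le one_lt_two (by exact_mod_cast hpos _)
    (by exact_mod_cast subwordComplexity_add_le x a b)

lemma bddBelow_logb_subwordComplexity_div :
    BddBelow (Set.range fun n : ℕ => Real.logb 2 (subwordComplexity x n) / n) :=
  ⟨0, Set.forall_mem_range.2 fun n => div_nonneg
    (Real.logb_nonneg one_lt_two (by exact_mod_cast subwordComplexity_pos x n)) n.cast_nonneg⟩

end Entropy

end KolmogorovEntropy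

open KolmogorovEntropy in
theorem kolmogorov_entropy_eq_topological_entropy_general {A : Type} [Primcodable A] [Fintype A]
    (D : List Bool → Option (List A))
    (hU : ∀ D' : List Bool → Option (List A), Computable D' →
      ∃ C : ℕ, ∀ (p' : List Bool) (u : List A), D' p' = some u →
        ∃ p : List Bool, D p = some u ∧ p.length ≤ p'.length + C)
    (x : ℕ → A) :
    ∃ E : ℝ,
      Tendsto (fun n : ℕ => Real.logb 2 (subwordComplexity x n : ℝ) / (n : ℝ))
        atTop (nhds E) ∧
      Tendsto (fun n : ℕ => (maxFactorComplexity D x n : ℝ) / (n : ℝ))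
        atTop (nhds E) := by
  have hsub := subadditive_logb_subwordComplexity x
  have hlim := hsub.tendsto_lim (bddBelow_logb_subwordComplexity_div x)
  refine ⟨hsub.lim, hlim, tendsto_div_of_le_add_one_of_eventually_le hlim
    (r := fun m => (Real.logb 2 (subwordComplexity x m) + 1) / m) ?_
    (logb_subwordComplexity_le x hU) ?_⟩
  · simpa [add_div] using hlim.add tendsto_one_div_atTop_nhds_zero_nat
  · filter_upwards [eventually_gt_atTop 0] with m hm
    exact maxFactorComplexity_le_affine x hU hm

/-- For any sequence over a finite alphabet, the Kolmogorov-complexity entropy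
`E_k(x) = lim (1/n)·max{K(u) : u factor of length n}` exists and equals the
topological entropy `E_t(x) = lim (1/n)·log₂ p_x(n)`.  Here `K` is taken
relative to a computable decoder `D` that is additively optimal among
computable decoders. -/
theorem kolmogorov_entropy_eq_topological_entropy {A : Type} [Primcodable A] [Fintype A]
    (D : List Bool → Option (List A)) (hD : Computable D)
    (hU : ∀ D' : List Bool → Option (List A), Computable D' →
      ∃ C : ℕ, ∀ (p' : List Bool) (u : List A), D' p' = some u →
        ∃ p : List Bool, D p = some u ∧ p.length ≤ p'.length + C)
    (x : ℕ → A) :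
    ∃ E : ℝ,
      Tendsto (fun n : ℕ => Real.logb 2 (subwordComplexity x n : ℝ) / (n : ℝ))
        atTop (nhds E) ∧
      Tendsto (fun n : ℕ => (maxFactorComplexity D x n : ℝ) / (n : ℝ))
        atTop (nhds E) :=
  kolmogorov_entropy_eq_topological_entropy_general D hU x
end

section
/- The aperiodicity measure of any sequence over a k-letter alphabet is at most 1 − 1/(2k). -/
open Filter

/-- The Besicovitch distance between the sequence `x` and its shift by `m`,
i.e. `liminf (1/n) · #{i < n : x i ≠ x (i+m)}`. -/
noncomputable def besicovitchShiftDist {A : Type*} [DecidableEq A]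
    (x : ℕ → A) (m : ℕ) : ℝ :=
  liminf (fun n : ℕ =>
    (((Finset.range n).filter (fun i => x i ≠ x (i + m))).card : ℝ) / (n : ℝ)) atTop

/-- The aperiodicity measure of `x`:
`AM(x) = inf { d_B(x, L^m x) : m ≥ 1 }`. -/
noncomputable def aperiodicityMeasure {A : Type*} [DecidableEq A] (x : ℕ → A) : ℝ :=
  sInf {r : ℝ | ∃ m : ℕ, 1 ≤ m ∧ r = besicovitchShiftDist x m}

/-! Cut `[0, n)` into `⌊n / L⌋` blocks of length `L`. By Cauchy–Schwarz over the `k` letters, a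
block contains at least `L² / k` ordered pairs `(i, j)` with `x i = x j`; apart from the `L`
diagonal ones these are the pairs `{i, i + m}` with `1 ≤ m < L`, each counted twice. So the
`L - 1` shifts `1 ≤ m < L` together agree with `x` at no fewer than about `n (L - k) / (2k)`
places of `[0, n)`, and for every `n` one of them agrees at a fraction `(L - k) / (2k (L - 1))`
of `[0, n)`. Some single shift does so for infinitely many `n`, which bounds its Besicovitch
distance by `1 - (L - k) / (2k (L - 1))`; this tends to `1 - 1 / (2k)` as `L → ∞`. -/

open Finset Topology

theorem Nat.sub_lt_of_div_eq_div {i j L : ℕ} (hL : 0 < L) (h : i / L = j / L) (hij : i < j) :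
    j - i < L := by
  have hj := Nat.lt_div_mul_add (a := j) hL
  have hi := Nat.div_mul_le_self i L
  rw [h] at hi
  omega

theorem Finset.card_sq_le_card_mul_card_filter_eq {ι κ : Type*} [DecidableEq κ] {s : Finset ι}
    {t : Finset κ} {f : ι → κ} (hf : ∀ i ∈ s, f i ∈ t) :
    #s ^ 2 ≤ #t * #{p ∈ s ×ˢ s | f p.1 = f p.2} := by
  have hpairs : #{p ∈ s ×ˢ s | f p.1 = f p.2} = ∑ c ∈ t, #{i ∈ s | f i = c} ^ 2 := by
    rw [card_eq_sum_card_fiberwise (f := fun p => f p.1) (t := t)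
      fun p hp => hf _ (mem_product.1 (mem_filter.1 hp).1).1]
    refine sum_congr rfl fun c _ => ?_
    rw [sq, ← card_product]
    congr 1
    ext ⟨i, j⟩
    simp only [mem_filter, mem_product]
    constructor
    · rintro ⟨⟨⟨hi, hj⟩, hij⟩, rfl⟩
      exact ⟨⟨hi, rfl⟩, hj, hij.symm⟩
    · rintro ⟨⟨hi, rfl⟩, hj, hji⟩
      exact ⟨⟨⟨hi, hj⟩, hji.symm⟩, rfl⟩
  rw [hpairs, card_eq_sum_card_fiberwise hf]
  exact sq_sum_le_card_mul_sum_sq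

theorem liminf_le_of_frequently_le_add_div {u : ℕ → ℝ} {b c : ℝ}
    (hu : IsBoundedUnder (· ≥ ·) atTop u) (h : ∃ᶠ n : ℕ in atTop, u n ≤ b + c / n) :
    liminf u atTop ≤ b := by
  refine le_of_forall_pos_le_add fun ε hε => liminf_le_of_frequently_le ?_ hu
  have hsmall : ∀ᶠ n : ℕ in atTop, c / n ≤ ε :=
    (tendsto_const_div_atTop_nhds_zero_nat c).eventually (ge_mem_nhds hε)
  exact (h.and_eventually hsmall).mono fun n hn => by linarith [hn.1, hn.2]

theorem tendsto_natCast_sub_div_natCast_sub (a b : ℝ) :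
    Tendsto (fun n : ℕ => ((n : ℝ) - a) / (n - b)) atTop (𝓝 1) := by
  have hlim := (tendsto_natCast_div_add_atTop (-b)).div (tendsto_natCast_div_add_atTop (-a))
    one_ne_zero
  rw [div_one] at hlim
  refine hlim.congr' ((eventually_ne_atTop 0).mono fun n hn => ?_)
  simp only [← sub_eq_add_neg]
  exact div_div_div_cancel_left' _ _ (Nat.cast_ne_zero.2 hn)

section ShiftAgreements

variable {A : Type*} [DecidableEq A]

def shiftAgreements (x : ℕ → A) (m n : ℕ) : Finset ℕ :=
  {i ∈ range n | x i = x (i + m)}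

theorem card_eqPairs_sameBlock_le (x : ℕ → A) (L n : ℕ) :
    #{p ∈ range (n / L * L) ×ˢ range (n / L * L) | (p.1 / L, x p.1) = (p.2 / L, x p.2)} ≤
      n / L * L + 2 * ∑ m ∈ Ico 1 L, #(shiftAgreements x m n) := by
  set s := range (n / L * L)
  set P := {p ∈ s ×ˢ s | (p.1 / L, x p.1) = (p.2 / L, x p.2)}
  set Q := {p ∈ P | p.1 < p.2}
  have hQ : #Q ≤ ∑ m ∈ Ico 1 L, #(shiftAgreements x m n) := by
    rw [← card_sigma]
    refine card_le_card_of_injOn (fun p => ⟨p.2 - p.1, p.1⟩) (fun p hp => ?_) ?_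
    · simp only [Q, P, s, mem_coe, mem_filter, mem_product, mem_range, Prod.mk.injEq] at hp
      obtain ⟨⟨⟨h1, -⟩, hblock, hx⟩, hlt⟩ := hp
      have hL : 0 < L := Nat.pos_of_ne_zero fun h0 => by simp [h0] at h1
      have hn := Nat.div_mul_le_self n L
      simp only [coe_sigma, Set.mem_sigma_iff, mem_coe, mem_Ico, shiftAgreements, mem_filter,
        mem_range, Nat.add_sub_cancel' hlt.le]
      exact ⟨⟨by omega, Nat.sub_lt_of_div_eq_div hL hblock hlt⟩, by omega, hx⟩
    · rintro ⟨i, j⟩ hp ⟨i', j'⟩ hp' h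
      simp only [Q, mem_coe, mem_filter, Sigma.mk.injEq, heq_eq_eq] at hp hp' h
      ext <;> simp only <;> omega
  have hcover : P ⊆ (s.image fun i => (i, i)) ∪ Q ∪ Q.image Prod.swap := by
    rintro ⟨i, j⟩ hp
    have hp' : (j, i) ∈ P := by
      simp only [P, mem_filter, mem_product] at hp ⊢
      exact ⟨hp.1.symm, hp.2.symm⟩
    rcases lt_trichotomy i j with h | rfl | h
    · exact mem_union_left _ (mem_union_right _ (mem_filter.2 ⟨hp, h⟩))
    · exact mem_union_left _ (mem_union_left _
        (mem_image_of_mem _ (mem_product.1 (mem_filter.1 hp).1).1))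
    · exact mem_union_right _ (mem_image.2 ⟨(j, i), mem_filter.2 ⟨hp', h⟩, rfl⟩)
  calc #P ≤ #((s.image fun i => (i, i)) ∪ Q ∪ Q.image Prod.swap) := card_le_card hcover
    _ ≤ #s + #Q + #Q := by
      grw [card_union_le, card_union_le, card_image_le, card_image_le]
    _ ≤ n / L * L + 2 * ∑ m ∈ Ico 1 L, #(shiftAgreements x m n) := by
      rw [card_range]
      omega

theorem div_mul_sq_le_card_mul_sum_shiftAgreements [Fintype A] (x : ℕ → A) (L n : ℕ) :
    n / L * L ^ 2 ≤
      Fintype.card A * (n / L * L + 2 * ∑ m ∈ Ico 1 L, #(shiftAgreements x m n)) := by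
  rcases (n / L).eq_zero_or_pos with hq | hq
  · simp [hq]
  refine Nat.le_of_mul_le_mul_left ?_ hq
  -- Cauchy–Schwarz for all blocks at once: colour `i` by its block and its letter.
  have hcolours : ∀ i ∈ range (n / L * L), (i / L, x i) ∈ range (n / L) ×ˢ (univ : Finset A) :=
    fun i hi => mem_product.2
      ⟨mem_range.2 (Nat.div_lt_of_lt_mul (by simpa [mul_comm] using hi)), mem_univ _⟩
  calc n / L * (n / L * L ^ 2) = #(range (n / L * L)) ^ 2 := by rw [card_range]; ring
    _ ≤ #(range (n / L) ×ˢ (univ : Finset A)) * _ := card_sq_le_card_mul_card_filter_eq hcolours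
    _ ≤ n / L * Fintype.card A * (n / L * L + 2 * ∑ m ∈ Ico 1 L, #(shiftAgreements x m n)) := by
      rw [card_product, card_range, card_univ]
      exact Nat.mul_le_mul_left _ (card_eqPairs_sameBlock_le x L n)
    _ = _ := by ring

theorem exists_shift_div_mul_sq_le [Fintype A] (x : ℕ → A) {L : ℕ} (hL : 2 ≤ L) (n : ℕ) :
    ∃ m ∈ Ico 1 L,
      n / L * L ^ 2 ≤ Fintype.card A * (n / L * L + 2 * (L - 1) * #(shiftAgreements x m n)) := by
  obtain ⟨m, hm, hmax⟩ := exists_max_image (Ico 1 L) (fun m => #(shiftAgreements x m n))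
    (nonempty_Ico.2 (by omega))
  refine ⟨m, hm, (div_mul_sq_le_card_mul_sum_shiftAgreements x L n).trans ?_⟩
  have hsum := sum_le_card_nsmul _ _ _ hmax
  rw [Nat.card_Ico, smul_eq_mul] at hsum
  rw [mul_assoc 2]
  gcongr

theorem exists_shift_frequently_le_card_shiftAgreements [Fintype A] (x : ℕ → A) {L : ℕ}
    (hL : Fintype.card A < L) :
    ∃ m ∈ Ico 1 L, ∃ᶠ n : ℕ in atTop,
      ((L : ℝ) - Fintype.card A) / (2 * Fintype.card A * (L - 1)) * (n - L) ≤
        #(shiftAgreements x m n) := by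
  have hk : 0 < Fintype.card A := Fintype.card_pos_iff.2 ⟨x 0⟩
  refine (frequently_exists_finset (Ico 1 L)).1 (Frequently.of_forall fun n => ?_)
  obtain ⟨m, hm, h⟩ := exists_shift_div_mul_sq_le x (L := L) (by omega) n
  refine ⟨m, hm, ?_⟩
  have hqL : (n : ℝ) - L ≤ (n / L : ℕ) * L := by
    rw [sub_le_iff_le_add]
    exact_mod_cast (Nat.lt_div_mul_add (a := n) (by omega)).le
  have hk' : (0 : ℝ) < Fintype.card A := by exact_mod_cast hk
  have hkL : (Fintype.card A : ℝ) < L := by exact_mod_cast hL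
  have hL1 : (1 : ℝ) < L := by exact_mod_cast (show 1 < L by omega)
  have h' : ((n / L * L ^ 2 : ℕ) : ℝ) ≤
      ((Fintype.card A * (n / L * L + 2 * (L - 1) * #(shiftAgreements x m n)) : ℕ) : ℝ) := by
    exact_mod_cast h
  push_cast [Nat.cast_sub (by omega : 1 ≤ L)] at h'
  rw [div_mul_eq_mul_div, div_le_iff₀ (mul_pos (mul_pos two_pos hk') (sub_pos.2 hL1))]
  nlinarith [mul_le_mul_of_nonneg_left hqL (sub_nonneg.2 hkL.le)]

theorem besicovitchShiftDist_nonneg (x : ℕ → A) (m : ℕ) : 0 ≤ besicovitchShiftDist x m := by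
  refine le_liminf_of_le ?_ (Eventually.of_forall fun n => by positivity)
  refine isBoundedUnder_of ⟨1, fun n => div_le_one_of_le₀ ?_ n.cast_nonneg⟩ |>.isCoboundedUnder_ge
  exact_mod_cast (card_filter_le _ _).trans (card_range n).le

theorem besicovitchShiftDist_le_of_frequently {x : ℕ → A} {m : ℕ} {β C : ℝ}
    (h : ∃ᶠ n : ℕ in atTop, β * (n - C) ≤ #(shiftAgreements x m n)) :
    besicovitchShiftDist x m ≤ 1 - β := by
  refine liminf_le_of_frequently_le_add_div (c := β * C)
    (isBoundedUnder_of ⟨0, fun n => by positivity⟩) ?_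
  refine (h.and_eventually (eventually_gt_atTop 0)).mono fun n ⟨hn, hpos⟩ => ?_
  have hsplit := card_filter_add_card_filter_not (s := range n) (fun i => x i = x (i + m))
  rw [card_range] at hsplit
  have hcount : (#{i ∈ range n | x i ≠ x (i + m)} : ℝ) = n - #(shiftAgreements x m n) := by
    rw [eq_sub_iff_add_eq, add_comm]
    exact_mod_cast hsplit
  have hn0 : (0 : ℝ) < n := by exact_mod_cast hpos
  rw [hcount, div_le_iff₀ hn0, add_mul, div_mul_cancel₀ _ hn0.ne']
  linarith

theorem aperiodicityMeasure_le_besicovitchShiftDist (x : ℕ → A) {m : ℕ} (hm : 1 ≤ m) :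
    aperiodicityMeasure x ≤ besicovitchShiftDist x m :=
  csInf_le ⟨0, by rintro _ ⟨m, -, rfl⟩; exact besicovitchShiftDist_nonneg x m⟩ ⟨m, hm, rfl⟩

theorem aperiodicityMeasure_le_of_card_lt [Fintype A] (x : ℕ → A) {L : ℕ}
    (hL : Fintype.card A < L) :
    aperiodicityMeasure x ≤ 1 - ((L : ℝ) - Fintype.card A) / (2 * Fintype.card A * (L - 1)) := by
  obtain ⟨m, hm, hfreq⟩ := exists_shift_frequently_le_card_shiftAgreements x hL
  exact (aperiodicityMeasure_le_besicovitchShiftDist x (mem_Ico.1 hm).1).trans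
    (besicovitchShiftDist_le_of_frequently hfreq)

end ShiftAgreements

/-- The aperiodicity measure of any sequence over a `k`-letter alphabet is at
most `1 - 1/(2k)`. -/
theorem aperiodicityMeasure_le {A : Type*} [DecidableEq A] [Fintype A]
    (k : ℕ) (hk : Fintype.card A = k) (x : ℕ → A) :
    aperiodicityMeasure x ≤ 1 - 1 / (2 * (k : ℝ)) := by
  subst hk
  have hlim := ((tendsto_natCast_sub_div_natCast_sub (Fintype.card A) 1).div_const
    (2 * Fintype.card A)).const_sub 1
  refine ge_of_tendsto (hlim.congr fun L => by rw [div_div, mul_comm ((L : ℝ) - 1)]) ?_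
  exact (eventually_gt_atTop _).mono fun L hL => aperiodicityMeasure_le_of_card_lt x hL
end
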